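/- arXiv:2409.08957 — 5 statements merged into one kernel-verified Lean document; each statement's English description precedes it below -/
import Mathlib

section
/- Let C be a category with covers and let f : X → Y be a morphism of C. Then f is a cover if and only if there exists a cover g : Z → Y such that the projection Z ×_Y X → Z of the pullback of f along g is a cover. (Here the pullback Z ×_Y X exists in C because it is also the pullback of the cover g along f.) -/
open CategoryTheory CategoryTheory.Limits Opposite

universe v u

/-- A *category with covers*: a (locally small) category `C` together with a distinguished
subcategory of morphisms, called *covers*, satisfying the axioms of the paper:
(i) there is a terminal object and every map to it is a cover;
(ii) pullbacks of covers along arbitrary morphisms exist and are covers;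
(iii) if `f` and `f ≫ g` are covers then so is `g`;
(iv) every cover is an effective epimorphism, i.e. `X ×_Y X ⇉ X → Y` is a coequalizer. -/
structure CoversOn (C : Type u) [Category.{v} C] where
  /-- the distinguished class of covers -/
  isCover : ∀ ⦃X Y : C⦄, (X ⟶ Y) → Prop
  /-- identities are covers (covers form a subcategory) -/
  isCover_id : ∀ X : C, isCover (𝟙 X)
  /-- covers are closed under composition (covers form a subcategory) -/
  isCover_comp : ∀ {X Y Z : C} {f : X ⟶ Y} {g : Y ⟶ Z}, isCover f → isCover g → isCover (f ≫ g)
  /-- axiom (i): `C` has a terminal object -/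
  hasTerminal : HasTerminal C
  /-- axiom (i): every morphism to a terminal object is a cover -/
  isCover_toTerminal : ∀ {T : C} (hT : IsTerminal T) (X : C), isCover (hT.from X)
  /-- axiom (ii): pullbacks of covers along arbitrary morphisms exist -/
  hasPullback_of_isCover : ∀ {X Y Z : C} (f : X ⟶ Z) {g : Y ⟶ Z}, isCover g → HasPullback f g
  /-- axiom (ii): pullbacks of covers are covers -/
  isCover_of_isPullback : ∀ {P X Y Z : C} {fst : P ⟶ X} {snd : P ⟶ Y} {f : X ⟶ Z} {g : Y ⟶ Z},
    IsPullback fst snd f g → isCover g → isCover fst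
  /-- axiom (iii): right cancellation -/
  isCover_of_comp : ∀ {X Y Z : C} {f : X ⟶ Y} {g : Y ⟶ Z}, isCover f → isCover (f ≫ g) → isCover g
  /-- axiom (iv): covers are effective epimorphisms: for any kernel pair `p₁, p₂ : X ×_Y X ⇉ X`
  of a cover `f : X ⟶ Y`, the fork `X ×_Y X ⇉ X → Y` is a coequalizer -/
  isCoequalizer_of_isCover : ∀ {X Y : C} {f : X ⟶ Y}, isCover f →
    ∀ {P : C} {p₁ p₂ : P ⟶ X} (h : IsPullback p₁ p₂ f f),
      Nonempty (IsColimit (Cofork.ofπ f h.w))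

/-- In a category with covers, a morphism `f : X ⟶ Y` is a cover if and only if
there exists a cover `g : Z ⟶ Y` such that the projection `Z ×_Y X ⟶ Z` of the pullback of `f`
along `g` is a cover. -/
theorem stmt_2 {C : Type u} [Category.{v} C] (cov : CoversOn C) {X Y : C} (f : X ⟶ Y) :
    cov.isCover f ↔
      ∃ (Z : C) (g : Z ⟶ Y), cov.isCover g ∧
        ∃ (P : C) (p₁ : P ⟶ Z) (p₂ : P ⟶ X), IsPullback p₁ p₂ g f ∧ cov.isCover p₁ := by
  constructor
  · intro hf
    exact ⟨Y, 𝟙 Y, cov.isCover_id Y, X, f, 𝟙 X,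
      IsPullback.of_vert_isIso ⟨by simp⟩, hf⟩
  · rintro ⟨Z, g, hg, P, p₁, p₂, hpb, hp₁⟩
    have hp₂ : cov.isCover p₂ := cov.isCover_of_isPullback hpb.flip hg
    have : cov.isCover (p₂ ≫ f) := hpb.w ▸ cov.isCover_comp hp₁ hg
    exact cov.isCover_of_comp hp₂ this
end

section
/- Let C be a category with covers and let f : X → Y be a morphism of C. Then f is an isomorphism if and only if there exists a cover g : Z → Y such that the projection Z ×_Y X → Z of the pullback of f along g is an isomorphism. (Here the pullback Z ×_Y X exists in C because it is also the pullback of the cover g along f.) -/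
open CategoryTheory CategoryTheory.Limits Opposite

universe v u

lemma CoversOn.isCover_of_isIso {C : Type u} [Category.{v} C] (cov : CoversOn C)
    {A B : C} (i : A ⟶ B) [IsIso i] : cov.isCover i := by
  have sq : IsPullback i i (𝟙 B) (𝟙 B) :=
    IsPullback.of_horiz_isIso ⟨by simp⟩
  exact cov.isCover_of_isPullback sq (cov.isCover_id B)

lemma CoversOn.epi_of_isCover {C : Type u} [Category.{v} C] (cov : CoversOn C)
    {A B : C} {i : A ⟶ B} (hi : cov.isCover i) : Epi i := by
  have := cov.hasPullback_of_isCover i hi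
  obtain ⟨hc⟩ := cov.isCoequalizer_of_isCover hi (IsPullback.of_hasPullback i i)
  constructor
  intro W m m' h
  exact Cofork.IsColimit.hom_ext hc (by simpa using h)

/-- In a category with covers, a morphism `f : X ⟶ Y` is an isomorphism if and
only if there exists a cover `g : Z ⟶ Y` such that the projection `Z ×_Y X ⟶ Z` of the pullback
of `f` along `g` is an isomorphism. -/
theorem stmt_3 {C : Type u} [Category.{v} C] (cov : CoversOn C) {X Y : C} (f : X ⟶ Y) :
    IsIso f ↔
      ∃ (Z : C) (g : Z ⟶ Y), cov.isCover g ∧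
        ∃ (P : C) (p₁ : P ⟶ Z) (p₂ : P ⟶ X), IsPullback p₁ p₂ g f ∧ IsIso p₁ := by
  constructor
  · intro hf
    refine ⟨Y, 𝟙 Y, cov.isCover_id Y, X, f, 𝟙 X, IsPullback.of_horiz_isIso ⟨by simp⟩, hf⟩
  · rintro ⟨Z, g, hg, P, p₁, p₂, hP, hp₁⟩
    -- f is a cover
    have hp₂ : cov.isCover p₂ := cov.isCover_of_isPullback hP.flip hg
    have hh : cov.isCover (inv p₁ ≫ p₂) :=
      cov.isCover_comp (cov.isCover_of_isIso _) hp₂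
    have hgf : (inv p₁ ≫ p₂) ≫ f = g := by
      rw [Category.assoc, hP.w.symm, IsIso.inv_hom_id_assoc]
    have hf : cov.isCover f := cov.isCover_of_comp hh (by rwa [hgf])
    -- kernel pair of f
    have hQ := cov.hasPullback_of_isCover f hf
    set q₁ : pullback f f ⟶ X := pullback.fst f f
    set q₂ : pullback f f ⟶ X := pullback.snd f f
    have hker : IsPullback q₁ q₂ f f := IsPullback.of_hasPullback f f
    -- pull back g along q₁ ≫ f
    have hR := cov.hasPullback_of_isCover (q₁ ≫ f) hg
    set r : pullback (q₁ ≫ f) g ⟶ pullback f f := pullback.fst (q₁ ≫ f) g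
    set s : pullback (q₁ ≫ f) g ⟶ Z := pullback.snd (q₁ ≫ f) g
    have hRsq : IsPullback r s (q₁ ≫ f) g := IsPullback.of_hasPullback _ _
    have hr : cov.isCover r := cov.isCover_of_isPullback hRsq hg
    have hre : Epi r := cov.epi_of_isCover hr
    have w₁ : s ≫ g = (r ≫ q₁) ≫ f := by
      rw [Category.assoc]; exact hRsq.w.symm
    have w₂ : s ≫ g = (r ≫ q₂) ≫ f := by
      rw [w₁, Category.assoc, Category.assoc]
      exact congrArg (fun t => r ≫ t) hker.w
    have hu : hP.lift s (r ≫ q₁) w₁ = hP.lift s (r ≫ q₂) w₂ := by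
      have : hP.lift s (r ≫ q₁) w₁ ≫ p₁ = hP.lift s (r ≫ q₂) w₂ ≫ p₁ := by
        rw [hP.lift_fst, hP.lift_fst]
      exact (cancel_mono p₁).1 this
    have hq : q₁ = q₂ := by
      have : r ≫ q₁ = r ≫ q₂ := by
        rw [← hP.lift_snd s (r ≫ q₁) w₁, ← hP.lift_snd s (r ≫ q₂) w₂, hu]
      exact (cancel_epi r).1 this
    -- f is a split mono and epi, hence iso
    obtain ⟨hc⟩ := cov.isCoequalizer_of_isCover hf hker
    have hd : f ≫ Cofork.IsColimit.desc hc (𝟙 X) (by rw [hq]) = 𝟙 X :=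
      Cofork.IsColimit.π_desc' hc _ _
    have hfe : Epi f := cov.epi_of_isCover hf
    refine ⟨Cofork.IsColimit.desc hc (𝟙 X) (by rw [hq]), hd, ?_⟩
    rw [← cancel_epi f, ← Category.assoc, hd, Category.id_comp, Category.comp_id]
end

section
/- Let C be a category with covers, let n ≥ 0, and let f : X → Y be an n-stack in sC. Then f is (n+1)-coskeletal: the canonical map of simplicial presheaves X → Csk_{n+1}(f) := Csk_{n+1}X ×_{Csk_{n+1}Y} Y is an isomorphism, where Csk_k X denotes the simplicial presheaf m ↦ Csk_{k,m}X = hom(sk_k Δᵐ, X). -/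
open CategoryTheory CategoryTheory.Limits Opposite

universe v u

open Simplicial

namespace CatCov

variable {C : Type u} [Category.{v} C]

/-- The concrete pullback presheaf `F ×_H G` of two presheaf morphisms `α : F ⟶ H`, `β : G ⟶ H`. -/
@[simps]
def cpb {F G H : Cᵒᵖ ⥤ Type v} (α : F ⟶ H) (β : G ⟶ H) : Cᵒᵖ ⥤ Type v where
  obj U := { p : F.obj U × G.obj U // α.app U p.1 = β.app U p.2 }
  map {U V} u := TypeCat.ofHom fun p => ⟨(F.map u p.1.1, G.map u p.1.2), by
    dsimp
    rw [NatTrans.naturality_apply, NatTrans.naturality_apply]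
    exact congrArg (H.map u) p.2⟩
  map_id U := by
    apply ConcreteCategory.hom_ext; intro p
    apply Subtype.ext
    dsimp
    simp
  map_comp {U V W} u v := by
    apply ConcreteCategory.hom_ext; intro p
    apply Subtype.ext
    dsimp
    simp

/-- First projection of the concrete pullback presheaf. -/
@[simps]
def cpbFst {F G H : Cᵒᵖ ⥤ Type v} (α : F ⟶ H) (β : G ⟶ H) : cpb α β ⟶ F where
  app U := TypeCat.ofHom fun p => p.1.1

/-- Second projection of the concrete pullback presheaf. -/
@[simps]
def cpbSnd {F G H : Cᵒᵖ ⥤ Type v} (α : F ⟶ H) (β : G ⟶ H) : cpb α β ⟶ G where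
  app U := TypeCat.ofHom fun p => p.1.2

/-- The universal map into the concrete pullback presheaf. -/
@[simps]
def cpbLift {E F G H : Cᵒᵖ ⥤ Type v} {α : F ⟶ H} {β : G ⟶ H}
    (p : E ⟶ F) (q : E ⟶ G) (w : p ≫ α = q ≫ β) : E ⟶ cpb α β where
  app U := TypeCat.ofHom fun x => ⟨(p.app U x, q.app U x), types_congr_hom (NatTrans.congr_app w U) x⟩
  naturality {U V} u := by
    apply ConcreteCategory.hom_ext; intro x
    apply Subtype.ext
    simp only [types_comp_apply, TypeCat.ofHom_apply, cpb_map]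
    exact Prod.ext (NatTrans.naturality_apply p u x) (NatTrans.naturality_apply q u x)

/-- Functoriality of the concrete pullback presheaf in the defining cospan. -/
@[simps]
def cpbMap {F G H F' G' H' : Cᵒᵖ ⥤ Type v} {α : F ⟶ H} {β : G ⟶ H}
    {α' : F' ⟶ H'} {β' : G' ⟶ H'} (tF : F ⟶ F') (tG : G ⟶ G') (tH : H ⟶ H')
    (hα : α ≫ tH = tF ≫ α') (hβ : β ≫ tH = tG ≫ β') : cpb α β ⟶ cpb α' β' where
  app U := TypeCat.ofHom fun p => ⟨(tF.app U p.1.1, tG.app U p.1.2), by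
    have h1 := types_congr_hom (NatTrans.congr_app hα U) p.1.1
    have h2 := types_congr_hom (NatTrans.congr_app hβ U) p.1.2
    dsimp at h1 h2 ⊢
    rw [← h1, ← h2]
    exact congrArg (tH.app U) p.2⟩
  naturality {U V} u := by
    apply ConcreteCategory.hom_ext; intro p
    apply Subtype.ext
    change (tF.app V (F.map u p.1.1), tG.app V (G.map u p.1.2)) =
      (F'.map u (tF.app U p.1.1), G'.map u (tG.app U p.1.2))
    exact Prod.ext (NatTrans.naturality_apply tF u p.1.1) (NatTrans.naturality_apply tG u p.1.2)

/-- For a simplicial presheaf `F` and a simplicial set `K`, the presheaf `hom(K, F)` of simplicial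
maps from `K` into (the `U`-points of) `F`; concretely, a `U`-point is a compatible family
assigning to each simplex of `K` a `U`-point of the corresponding level of `F`. -/
@[simps]
def sHom (K : SSet.{v}) (F : SimplicialObject (Cᵒᵖ ⥤ Type v)) : Cᵒᵖ ⥤ Type v where
  obj U := { ξ : ∀ (j : SimplexCategoryᵒᵖ), K.obj j → (F.obj j).obj U //
      ∀ (j j' : SimplexCategoryᵒᵖ) (β : j ⟶ j') (a : K.obj j),
        ξ j' (K.map β a) = (F.map β).app U (ξ j a) }
  map {U V} u := TypeCat.ofHom fun ξ => ⟨fun j a => (F.obj j).map u (ξ.1 j a), by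
    intro j j' β a
    dsimp only
    rw [ξ.2 j j' β a]
    exact (NatTrans.naturality_apply (F.map β) u (ξ.1 j a)).symm⟩
  map_id U := by
    apply ConcreteCategory.hom_ext; intro ξ
    apply Subtype.ext
    funext j a
    dsimp
    simp
  map_comp {U V W} u v := by
    apply ConcreteCategory.hom_ext; intro ξ
    apply Subtype.ext
    funext j a
    dsimp
    simp

/-- `hom(K, -)` is covariantly functorial in the simplicial presheaf. -/
@[simps]
def sHomMap (K : SSet.{v}) {F G : SimplicialObject (Cᵒᵖ ⥤ Type v)} (φ : F ⟶ G) :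
    sHom K F ⟶ sHom K G where
  app U := TypeCat.ofHom fun ξ => ⟨fun j a => (φ.app j).app U (ξ.1 j a), by
    intro j j' β a
    dsimp only
    rw [ξ.2 j j' β a]
    exact types_congr_hom (congrArg (fun (t : F.obj j ⟶ G.obj j') => t.app U) (φ.naturality β)) (ξ.1 j a)⟩
  naturality {U V} u := by
    apply ConcreteCategory.hom_ext; intro ξ
    apply Subtype.ext
    funext j a
    dsimp
    exact NatTrans.naturality_apply (φ.app j) u (ξ.1 j a)

/-- `hom(-, F)` is contravariantly functorial in the simplicial set. -/
@[simps]
def sHomRes {K L : SSet.{v}} (i : K ⟶ L) (F : SimplicialObject (Cᵒᵖ ⥤ Type v)) :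
    sHom L F ⟶ sHom K F where
  app U := TypeCat.ofHom fun ξ => ⟨fun j a => ξ.1 j (i.app j a), by
    intro j j' β a
    rw [← ξ.2 j j' β (i.app j a)]
    exact congrArg (ξ.1 j') (types_congr_hom (i.naturality β) a)⟩
  naturality {U V} u := by
    rfl

/-- The canonical "Yoneda" map sending an `n`-simplex of a simplicial presheaf `F` to the
corresponding simplicial map `Δ[n] ⟶ F`. -/
@[simps]
def fromSimplex (F : SimplicialObject (Cᵒᵖ ⥤ Type v)) (n : SimplexCategory) :
    F.obj (op n) ⟶ sHom (SSet.stdSimplex.obj n) F where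
  app U := TypeCat.ofHom fun x => ⟨fun j α => (F.map α.down.op).app U x, by
    intro j j' β α
    show (F.map ((β.unop ≫ α.down)).op).app U x = _
    rw [op_comp, Quiver.Hom.op_unop, F.map_comp]
    rfl⟩
  naturality {U V} u := by
    apply ConcreteCategory.hom_ext; intro x
    apply Subtype.ext
    funext j α
    dsimp
    exact NatTrans.naturality_apply (F.map α.down.op) u x

/-- Restriction of an `n`-simplex of `F` along a map of simplicial sets `ι : K ⟶ Δ[n]`. -/
def restrictAlong {K : SSet.{v}} {n : SimplexCategory} (ι : K ⟶ SSet.stdSimplex.obj n)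
    (F : SimplicialObject (Cᵒᵖ ⥤ Type v)) : F.obj (op n) ⟶ sHom K F :=
  fromSimplex F n ≫ sHomRes ι F

lemma restrictAlong_natural {K : SSet.{v}} {n : SimplexCategory}
    (ι : K ⟶ SSet.stdSimplex.obj n) {F G : SimplicialObject (Cᵒᵖ ⥤ Type v)} (φ : F ⟶ G) :
    restrictAlong ι F ≫ sHomMap K φ = φ.app (op n) ≫ restrictAlong ι G := by
  apply NatTrans.ext
  funext U
  apply ConcreteCategory.hom_ext; intro x
  apply Subtype.ext
  funext j a
  dsimp [restrictAlong]
  exact types_congr_hom (congrArg (fun (t : F.obj (op n) ⟶ G.obj j) => t.app U)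
    (φ.naturality (ι.app j a).down.op)) x

/-- For `ι : K ⟶ Δ[n]` and `φ : F ⟶ G`, the relative object
`(K ↪ Δ[n])(φ) := hom(K, F) ×_{hom(K, G)} G_n`. -/
def relObj {K : SSet.{v}} {n : SimplexCategory} (ι : K ⟶ SSet.stdSimplex.obj n)
    {F G : SimplicialObject (Cᵒᵖ ⥤ Type v)} (φ : F ⟶ G) : Cᵒᵖ ⥤ Type v :=
  cpb (sHomMap K φ) (restrictAlong ι G)

/-- The canonical comparison map `F_n ⟶ hom(K, F) ×_{hom(K, G)} G_n`. -/
def relMap {K : SSet.{v}} {n : SimplexCategory} (ι : K ⟶ SSet.stdSimplex.obj n)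
    {F G : SimplicialObject (Cᵒᵖ ⥤ Type v)} (φ : F ⟶ G) : F.obj (op n) ⟶ relObj ι φ :=
  cpbLift (restrictAlong ι F) (φ.app (op n)) (restrictAlong_natural ι φ)

/-- `RepCover cov w` says: the presheaves `F` and `G` are representable, and, under (a choice of)
representing isomorphisms, the map of presheaves `w : F ⟶ G` corresponds to a cover in `C`.
(Covers are stable under pre- and post-composition with isomorphisms, so this does not depend on the
choice of representation.) -/
def RepCover (cov : CoversOn C) {F G : Cᵒᵖ ⥤ Type v} (w : F ⟶ G) : Prop :=
  ∃ (A B : C) (g : A ⟶ B) (eA : yoneda.obj A ≅ F) (eB : yoneda.obj B ≅ G),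
    cov.isCover g ∧ eA.hom ≫ w = yoneda.map g ≫ eB.hom

/-- A simplicial object of `C`, regarded as a simplicial presheaf via the Yoneda embedding. -/
abbrev ev (X : SimplicialObject C) : SimplicialObject (Cᵒᵖ ⥤ Type v) :=
  X ⋙ yoneda

/-- A morphism of simplicial objects of `C`, regarded as a morphism of simplicial presheaves. -/
abbrev evMap {X Y : SimplicialObject C} (f : X ⟶ Y) : ev X ⟶ ev Y :=
  Functor.whiskerRight f yoneda

/-- The relative horn object `Λⁿ_i(φ) := Λⁿ_i F ×_{Λⁿ_i G} G_n`. -/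
abbrev hornObj (n : ℕ) (i : Fin (n + 1)) {F G : SimplicialObject (Cᵒᵖ ⥤ Type v)} (φ : F ⟶ G) :
    Cᵒᵖ ⥤ Type v :=
  relObj (SSet.horn n i).ι φ

/-- The relative horn-filling map `λⁿ_i(φ) : F_n ⟶ Λⁿ_i(φ)`. -/
abbrev hornMap (n : ℕ) (i : Fin (n + 1)) {F G : SimplicialObject (Cᵒᵖ ⥤ Type v)} (φ : F ⟶ G) :
    F.obj (op (SimplexCategory.mk n)) ⟶ hornObj n i φ :=
  relMap (SSet.horn n i).ι φ

/-- The relative matching object `Mₙ(φ) := Mₙ F ×_{Mₙ G} G_n`. -/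
abbrev matchObj (n : ℕ) {F G : SimplicialObject (Cᵒᵖ ⥤ Type v)} (φ : F ⟶ G) :
    Cᵒᵖ ⥤ Type v :=
  relObj (SSet.boundary n).ι φ

/-- The relative boundary-filling map `μₙ(φ) : F_n ⟶ Mₙ(φ)`. -/
abbrev matchMap (n : ℕ) {F G : SimplicialObject (Cᵒᵖ ⥤ Type v)} (φ : F ⟶ G) :
    F.obj (op (SimplexCategory.mk n)) ⟶ matchObj n φ :=
  relMap (SSet.boundary n).ι φ

/-- A morphism of simplicial presheaves is a *Kan fibration* (relative to the covers on `C`) if,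
for all `n ≥ 1` and all `0 ≤ i ≤ n`, the relative horn object `Λⁿ_i(φ)` is representable and the
horn-filling map `λⁿ_i(φ)` is (represented by) a cover. -/
def IsKanFibration (cov : CoversOn C) {F G : SimplicialObject (Cᵒᵖ ⥤ Type v)} (φ : F ⟶ G) :
    Prop :=
  ∀ (n : ℕ) (i : Fin (n + 2)), RepCover cov (hornMap (n + 1) i φ)

/-- A morphism of simplicial presheaves is an *`N`-stack* if it is a Kan fibration and the
horn-filling maps `λᵏ_i(φ)` are isomorphisms for all `k > N`. -/
def IsStack (cov : CoversOn C) (N : ℕ) {F G : SimplicialObject (Cᵒᵖ ⥤ Type v)} (φ : F ⟶ G) :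
    Prop :=
  IsKanFibration cov φ ∧
    ∀ (k : ℕ) (i : Fin (k + 2)), N < k + 1 → IsIso (hornMap (k + 1) i φ)

/-- The number of vertices in the image of a simplex of `Δ[n]`. -/
def simplexRank {n : SimplexCategory} {j : SimplexCategoryᵒᵖ}
    (α : (SSet.stdSimplex.obj n).obj j) : ℕ :=
  (Finset.image α.down.toOrderHom Finset.univ).card

lemma simplexRank_map_le {n : SimplexCategory} {j j' : SimplexCategoryᵒᵖ} (β : j ⟶ j')
    (α : (SSet.stdSimplex.obj n).obj j) :
    simplexRank ((SSet.stdSimplex.obj n).map β α) ≤ simplexRank α := by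
  apply Finset.card_le_card
  intro x hx
  simp only [Finset.mem_image] at hx ⊢
  obtain ⟨y, -, hy⟩ := hx
  exact ⟨β.unop.toOrderHom y, Finset.mem_univ _, hy⟩

/-- The `k`-skeleton `sk_k Δ[n]` of the standard simplex `Δ[n]`, i.e. the simplicial subset of
simplices whose underlying map in `Δ` has image with at most `k + 1` elements. -/
def stdSk (k : ℕ) (n : SimplexCategory) : SSet.{v} where
  obj j := { α : (SSet.stdSimplex.obj n).obj j // simplexRank α ≤ k + 1 }
  map β := TypeCat.ofHom fun α => ⟨(SSet.stdSimplex.obj n).map β α.1,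
    le_trans (simplexRank_map_le β α.1) α.2⟩
  map_id _ := by
    apply ConcreteCategory.hom_ext; intro α
    apply Subtype.ext
    dsimp
    rw [FunctorToTypes.map_id_apply]
  map_comp β γ := by
    apply ConcreteCategory.hom_ext; intro α
    apply Subtype.ext
    dsimp
    rw [FunctorToTypes.map_comp_apply]

/-- The inclusion `sk_k Δ[n] ⟶ Δ[n]`. -/
def stdSkIncl (k : ℕ) (n : SimplexCategory) : stdSk.{v} k n ⟶ SSet.stdSimplex.obj n where
  app j := TypeCat.ofHom fun α => α.1
  naturality _ _ _ := rfl

/-- The relative coskeleton object `Csk_{k,m}(φ) := hom(sk_k Δ[m], F) ×_{hom(sk_k Δ[m], G)} G_m`.-/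
abbrev cskObjAt (k m : ℕ) {F G : SimplicialObject (Cᵒᵖ ⥤ Type v)} (φ : F ⟶ G) :
    Cᵒᵖ ⥤ Type v :=
  relObj (stdSkIncl k (SimplexCategory.mk m)) φ

/-- The canonical map `σᵐ_k(φ) : F_m ⟶ Csk_{k,m}(φ)`. -/
abbrev cskMapAt (k m : ℕ) {F G : SimplicialObject (Cᵒᵖ ⥤ Type v)} (φ : F ⟶ G) :
    F.obj (op (SimplexCategory.mk m)) ⟶ cskObjAt k m φ :=
  relMap (stdSkIncl k (SimplexCategory.mk m)) φ


/-! ### Auxiliary machinery for Statement 7 -/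

open SimplexCategory in
lemma sRank_le {jj nn : SimplexCategory} (g : jj ⟶ nn) :
    simplexRank (ULift.up g : (SSet.stdSimplex.obj nn).obj (op jj)) ≤ jj.len + 1 := by
  dsimp [simplexRank]
  exact (Finset.card_image_le).trans (by simp)

open SimplexCategory in
lemma sRank_comp_le {jj dd ee : SimplexCategory} (g : jj ⟶ dd) (γ : dd ⟶ ee) :
    simplexRank (ULift.up (g ≫ γ) : (SSet.stdSimplex.obj ee).obj (op jj)) ≤
      simplexRank (ULift.up g : (SSet.stdSimplex.obj dd).obj (op jj)) := by
  dsimp [simplexRank]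
  rw [OrderHom.comp_coe, ← Finset.image_image]
  exact Finset.card_image_le

open SimplexCategory in
lemma not_surj_of_rank {jj : SimplexCategory} {e : ℕ} (g : jj ⟶ SimplexCategory.mk (e + 1))
    (h : simplexRank (ULift.up g :
      (SSet.stdSimplex.obj (SimplexCategory.mk (e + 1))).obj (op jj)) < e + 2) :
    ¬ Function.Surjective g.toOrderHom := by
  intro hs
  have hsub : (Finset.univ : Finset (Fin (e + 2))) ⊆ Finset.image g.toOrderHom Finset.univ := by
    intro b _
    obtain ⟨a, ha⟩ := hs b
    exact Finset.mem_image.2 ⟨a, Finset.mem_univ a, ha⟩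
  have h2 := Finset.card_le_card hsub
  simp only [Finset.card_univ, Fintype.card_fin] at h2
  dsimp [simplexRank] at h
  omega

open SimplexCategory in
lemma not_inj_of_rank {p : ℕ} {nn : SimplexCategory} (g : SimplexCategory.mk p ⟶ nn)
    (h : simplexRank (ULift.up g :
      (SSet.stdSimplex.obj nn).obj (op (SimplexCategory.mk p))) < p + 1) :
    ¬ Function.Injective g.toOrderHom := by
  intro hi
  dsimp [simplexRank] at h
  have hcard := Finset.card_image_of_injective (Finset.univ : Finset (Fin (p + 1))) hi
  simp only [Finset.card_univ, Fintype.card_fin] at hcard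
  omega

open SimplexCategory in
lemma sRank_sigma_comp {p : ℕ} {nn : SimplexCategory} (i : Fin (p + 1))
    (g : SimplexCategory.mk p ⟶ nn) :
    simplexRank (ULift.up (σ i ≫ g) :
        (SSet.stdSimplex.obj nn).obj (op (SimplexCategory.mk (p + 1)))) =
      simplexRank (ULift.up g :
        (SSet.stdSimplex.obj nn).obj (op (SimplexCategory.mk p))) := by
  have hσ : Function.Surjective (σ i).toOrderHom := by
    intro b
    refine ⟨(δ i.castSucc).toOrderHom b, ?_⟩
    have := congrArg (fun (f : SimplexCategory.mk p ⟶ SimplexCategory.mk p) =>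
      f.toOrderHom b) (SimplexCategory.δ_comp_σ_self (i := i))
    simpa [comp_toOrderHom] using this
  dsimp [simplexRank]
  rw [OrderHom.comp_coe, ← Finset.image_image]
  congr 2
  apply Finset.eq_univ_of_forall
  intro b
  obtain ⟨a, ha⟩ := hσ b
  exact Finset.mem_image.2 ⟨a, Finset.mem_univ a, ha⟩

lemma Fcomp (F : SimplicialObject (Cᵒᵖ ⥤ Type v)) (U : Cᵒᵖ) {a b c : SimplexCategory}
    (g : a ⟶ b) (h : b ⟶ c) (x : (F.obj (op c)).obj U) :
    (F.map (g ≫ h).op).app U x = (F.map g.op).app U ((F.map h.op).app U x) := by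
  rw [op_comp, F.map_comp]
  rfl

lemma phiNat {F G : SimplicialObject (Cᵒᵖ ⥤ Type v)} (φ : F ⟶ G) (U : Cᵒᵖ)
    {a b : SimplexCategory} (g : a ⟶ b) (x : (F.obj (op b)).obj U) :
    (φ.app (op a)).app U ((F.map g.op).app U x) =
      (G.map g.op).app U ((φ.app (op b)).app U x) := by
  have := congrArg (fun (t : F.obj (op b) ⟶ G.obj (op a)) => t.app U) (φ.naturality g.op)
  exact types_congr_hom this x

section Stmt7Main

open SimplexCategory

variable {F G : SimplicialObject (Cᵒᵖ ⥤ Type v)}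
variable (φ : F ⟶ G) (n : ℕ) (U : Cᵒᵖ) {m : ℕ}
variable (ξ : (sHom (stdSk.{v} (n + 1) (SimplexCategory.mk m)) F).obj U)
variable (y : (G.obj (op (SimplexCategory.mk m))).obj U)

/-- The defining property of the canonical partial extension: `w` restricts on the
`(n+1)`-skeleton to the pullback of `ξ` along `α`, and maps to the pullback of `y` under `φ`. -/
def IsZ {dd : SimplexCategory} (α : dd ⟶ SimplexCategory.mk m)
    (w : (F.obj (op dd)).obj U) : Prop :=
  (∀ (j : SimplexCategoryᵒᵖ) (g : j.unop ⟶ dd)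
    (hg : simplexRank (ULift.up g : (SSet.stdSimplex.{v}.obj dd).obj j) ≤ n + 1 + 1),
    (F.map g.op).app U w = ξ.1 j ⟨ULift.up (g ≫ α), le_trans (sRank_comp_le g α) hg⟩)
  ∧ (φ.app (op dd)).app U w = (G.map α.op).app U y

lemma isZ_map {dd ee : SimplexCategory} {α : ee ⟶ SimplexCategory.mk m} (γ : dd ⟶ ee)
    {w : (F.obj (op ee)).obj U} (hw : IsZ φ n U ξ y α w) :
    IsZ φ n U ξ y (γ ≫ α) ((F.map γ.op).app U w) := by
  constructor
  · intro j g hg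
    rw [← Fcomp F U g γ w, hw.1 j (g ≫ γ) (le_trans (sRank_comp_le g γ) hg)]
    exact congrArg (ξ.1 j) (Subtype.ext (congrArg ULift.up (Category.assoc g γ α)))
  · rw [phiNat φ U γ w, hw.2, ← Fcomp G U γ α y]

variable {φ n}

lemma horn_bij (hφ : ∀ (k : ℕ) (i : Fin (k + 2)), n < k + 1 → IsIso (hornMap (k + 1) i φ))
    {e : ℕ} (he : n ≤ e) (i : Fin (e + 2)) :
    Function.Bijective ((hornMap (e + 1) i φ).app U) := by
  haveI h1 : IsIso (hornMap (e + 1) i φ) := hφ e i (by omega)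
  exact (isIso_iff_bijective _).mp inferInstance

lemma eq_of_faces (hφ : ∀ (k : ℕ) (i : Fin (k + 2)), n < k + 1 → IsIso (hornMap (k + 1) i φ))
    {e : ℕ} (he : n ≤ e) (i : Fin (e + 2))
    {x x' : (F.obj (op (SimplexCategory.mk (e + 1)))).obj U}
    (hfaces : ∀ t : Fin (e + 2), t ≠ i →
      (F.map (δ t).op).app U x = (F.map (δ t).op).app U x')
    (hphi : (φ.app (op (SimplexCategory.mk (e + 1)))).app U x =
      (φ.app (op (SimplexCategory.mk (e + 1)))).app U x') : x = x' := by
  apply (horn_bij U hφ he i).injective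
  apply Subtype.ext
  apply Prod.ext
  · show (restrictAlong ((SSet.horn (e + 1) i).ι) F).app U x =
      (restrictAlong ((SSet.horn (e + 1) i).ι) F).app U x'
    apply Subtype.ext
    funext j a
    show (F.map (a.1.down.op)).app U x = (F.map (a.1.down.op)).app U x'
    obtain ⟨t, ht⟩ := (Set.ne_univ_iff_exists_notMem _).mp ((SSet.mem_horn_iff _ _).mp a.2)
    simp only [Set.mem_union, Set.mem_range, Set.mem_singleton_iff, not_or, not_exists] at ht
    obtain ⟨θ', hθ'⟩ := SimplexCategory.eq_comp_δ_of_not_surjective' a.1.down t ht.1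
    rw [hθ', Fcomp F U θ' (δ t) x, Fcomp F U θ' (δ t) x', hfaces t ht.2]
  · exact hphi

lemma horn_fill (hφ : ∀ (k : ℕ) (i : Fin (k + 2)), n < k + 1 → IsIso (hornMap (k + 1) i φ))
    {e : ℕ} (he : n ≤ e) (i : Fin (e + 2))
    (η : (sHom (SSet.horn.{v} (e + 1) i) F).obj U)
    (yy : (G.obj (op (SimplexCategory.mk (e + 1)))).obj U)
    (hc : (sHomMap _ φ).app U η = (restrictAlong ((SSet.horn (e + 1) i).ι) G).app U yy) :
    ∃ x, (restrictAlong ((SSet.horn (e + 1) i).ι) F).app U x = η ∧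
      (φ.app (op (SimplexCategory.mk (e + 1)))).app U x = yy := by
  obtain ⟨x, hx⟩ := (horn_bij U hφ he i).surjective ⟨(η, yy), hc⟩
  exact ⟨x, congrArg (fun z => z.1.1) hx, congrArg (fun z => z.1.2) hx⟩

lemma isZ_unique (hφ : ∀ (k : ℕ) (i : Fin (k + 2)), n < k + 1 → IsIso (hornMap (k + 1) i φ)) :
    ∀ (N : ℕ) (dd : SimplexCategory), dd.len ≤ N →
      ∀ (α : dd ⟶ SimplexCategory.mk m) (w w' : (F.obj (op dd)).obj U),
      IsZ φ n U ξ y α w → IsZ φ n U ξ y α w' → w = w' := by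
  have small : ∀ (dd : SimplexCategory), dd.len ≤ n + 1 →
      ∀ (α : dd ⟶ SimplexCategory.mk m) (w w' : (F.obj (op dd)).obj U),
      IsZ φ n U ξ y α w → IsZ φ n U ξ y α w' → w = w' := by
    intro dd hdd α w w' hw hw'
    have hr : simplexRank (ULift.up (𝟙 dd) : (SSet.stdSimplex.obj dd).obj (op dd)) ≤
        n + 1 + 1 := le_trans (sRank_le (𝟙 dd)) (by omega)
    have h1 := hw.1 (op dd) (𝟙 dd) hr
    have h2 := hw'.1 (op dd) (𝟙 dd) hr
    rw [op_id, F.map_id] at h1 h2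
    exact h1.trans h2.symm
  intro N
  induction N with
  | zero =>
    intro dd hN α w w' hw hw'
    exact small dd (by omega) α w w' hw hw'
  | succ N ih =>
    intro dd hN α w w' hw hw'
    by_cases hdd : dd.len ≤ n + 1
    · exact small dd hdd α w w' hw hw'
    · push_neg at hdd
      obtain ⟨e, he⟩ : ∃ e, dd.len = e + 1 := ⟨dd.len - 1, by omega⟩
      obtain rfl : dd = SimplexCategory.mk (e + 1) := by
        rw [← SimplexCategory.mk_len dd, he]
      have hmk1 : (SimplexCategory.mk (e + 1)).len = e + 1 := SimplexCategory.len_mk _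
      have hmk2 : (SimplexCategory.mk e).len = e := SimplexCategory.len_mk _
      have hne : n ≤ e := by omega
      apply eq_of_faces U hφ hne (0 : Fin (e + 2))
      · intro t _
        exact ih (SimplexCategory.mk e) (by omega) (δ t ≫ α) _ _
          (isZ_map φ n U ξ y (δ t) hw) (isZ_map φ n U ξ y (δ t) hw')
      · rw [hw.2, hw'.2]

lemma isZ_exists (hφ : ∀ (k : ℕ) (i : Fin (k + 2)), n < k + 1 → IsIso (hornMap (k + 1) i φ))
    (hc : (sHomMap _ φ).app U ξ =
      (restrictAlong (stdSkIncl (n + 1) (SimplexCategory.mk m)) G).app U y) :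
    ∀ (N d : ℕ), d ≤ N → ∀ (α : SimplexCategory.mk d ⟶ SimplexCategory.mk m),
      ∃ w, IsZ φ n U ξ y α w := by
  have small : ∀ (d : ℕ), d ≤ n + 1 → ∀ (α : SimplexCategory.mk d ⟶ SimplexCategory.mk m),
      ∃ w, IsZ φ n U ξ y α w := by
    intro d hd α
    have hmk : (SimplexCategory.mk d).len = d := SimplexCategory.len_mk _
    have hα : simplexRank (ULift.up α :
        (SSet.stdSimplex.obj (SimplexCategory.mk m)).obj (op (SimplexCategory.mk d))) ≤
        n + 1 + 1 := le_trans (sRank_le α) (by omega)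
    refine ⟨ξ.1 (op (SimplexCategory.mk d)) ⟨ULift.up α, hα⟩, ?_, ?_⟩
    · intro j g hg
      have hnat := ξ.2 (op (SimplexCategory.mk d)) j g.op ⟨ULift.up α, hα⟩
      rw [← hnat]
      exact congrArg (ξ.1 j) (Subtype.ext rfl)
    · exact congrFun (congrFun (congrArg Subtype.val hc) (op (SimplexCategory.mk d)))
        ⟨ULift.up α, hα⟩
  intro N
  induction N with
  | zero =>
    intro d hd α
    exact small d (by omega) α
  | succ N ih =>
    intro d hd α
    by_cases hsmall : d ≤ n + 1
    · exact small d hsmall α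
    · push_neg at hsmall
      obtain ⟨e, rfl⟩ : ∃ e, d = e + 1 := ⟨d - 1, by omega⟩
      have hne : n ≤ e := by omega
      have hwt := fun t : Fin (e + 2) => ih e (by omega) (δ t ≫ α)
      choose w hw using hwt
      have hsel : ∀ (j : SimplexCategoryᵒᵖ) (a : (SSet.horn.{v} (e + 1) (0 : Fin (e + 2))).obj j),
          ∃ wa : (F.obj j).obj U, IsZ φ n U ξ y (a.1.down ≫ α) wa := by
        intro j a
        obtain ⟨t, ht⟩ := (Set.ne_univ_iff_exists_notMem _).mp ((SSet.mem_horn_iff _ _).mp a.2)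
        simp only [Set.mem_union, Set.mem_range, Set.mem_singleton_iff, not_or,
          not_exists] at ht
        obtain ⟨θ', hθ'⟩ := SimplexCategory.eq_comp_δ_of_not_surjective' a.1.down t ht.1
        refine ⟨(F.map θ'.op).app U (w t), ?_⟩
        have h2 := isZ_map φ n U ξ y θ' (hw t)
        rw [← Category.assoc] at h2
        rw [hθ']
        exact h2
      choose η hη using hsel
      have ηnat : ∀ (j j' : SimplexCategoryᵒᵖ) (β : j ⟶ j')
          (a : (SSet.horn.{v} (e + 1) (0 : Fin (e + 2))).obj j),
          η j' ((SSet.horn (e + 1) 0).toSSet.map β a) = (F.map β).app U (η j a) := by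
        intro j j' β a
        have h1 := hη j' ((SSet.horn (e + 1) 0).toSSet.map β a)
        have h2 := isZ_map φ n U ξ y β.unop (hη j a)
        rw [← Category.assoc] at h2
        exact isZ_unique U ξ y hφ j'.unop.len j'.unop le_rfl ((β.unop ≫ a.1.down) ≫ α) _ _
          h1 h2
      have hcomp : (sHomMap _ φ).app U
            (⟨η, ηnat⟩ : (sHom (SSet.horn.{v} (e + 1) (0 : Fin (e + 2))) F).obj U) =
          (restrictAlong ((SSet.horn (e + 1) (0 : Fin (e + 2))).ι) G).app U
            ((G.map α.op).app U y) := by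
        apply Subtype.ext
        funext j a
        show (φ.app j).app U (η j a) = (G.map (a.1.down.op)).app U ((G.map α.op).app U y)
        rw [(hη j a).2]
        exact Fcomp G U a.1.down α y
      obtain ⟨x, hx1, hx2⟩ := horn_fill U hφ hne (0 : Fin (e + 2)) ⟨η, ηnat⟩
        ((G.map α.op).app U y) hcomp
      have hface : ∀ t : Fin (e + 2), t ≠ 0 →
          IsZ φ n U ξ y (δ t ≫ α) ((F.map (δ t).op).app U x) := by
        intro t ht
        have hmem : Set.range (SSet.stdSimplex.asOrderHom ((ULift.up (δ t) :
            (SSet.stdSimplex.obj (SimplexCategory.mk (e + 1))).obj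
              (op (SimplexCategory.mk e)))))
            ∪ {(0 : Fin (e + 2))} ≠ Set.univ := by
          apply (Set.ne_univ_iff_exists_notMem _).mpr
          refine ⟨t, ?_⟩
          simp only [Set.mem_union, Set.mem_range, Set.mem_singleton_iff, not_or, not_exists]
          exact ⟨fun s => Fin.succAbove_ne t s, ht⟩
        have h1 := congrFun (congrFun (congrArg Subtype.val hx1) (op (SimplexCategory.mk e)))
          ⟨ULift.up (δ t), hmem⟩
        have h2 : (F.map ((δ t)).op).app U x = η (op (SimplexCategory.mk e))
            ⟨ULift.up (δ t), hmem⟩ := h1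
        rw [h2]
        exact hη (op (SimplexCategory.mk e)) ⟨ULift.up (δ t), hmem⟩
      have hface0 : IsZ φ n U ξ y (δ (0 : Fin (e + 2)) ≫ α)
          ((F.map (δ (0 : Fin (e + 2))).op).app U x) := by
        obtain ⟨e', rfl⟩ : ∃ e', e = e' + 1 := ⟨e - 1, by omega⟩
        have key : (F.map (δ (0 : Fin (e' + 3))).op).app U x = w 0 := by
          apply eq_of_faces U hφ (show n ≤ e' by omega) (0 : Fin (e' + 2))
          · intro s _
            have hid : δ (s : Fin (e' + 2)) ≫ δ (0 : Fin (e' + 3)) =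
                δ (0 : Fin (e' + 2)) ≫ δ s.succ := by
              have hdd := SimplexCategory.δ_comp_δ (n := e') (i := (0 : Fin (e' + 2)))
                (j := s) (Fin.zero_le s)
              rw [Fin.castSucc_zero] at hdd
              exact hdd.symm
            rw [← Fcomp F U (δ s) (δ 0) x, hid, Fcomp F U (δ 0) (δ s.succ) x]
            have hz1 := isZ_map φ n U ξ y (δ (0 : Fin (e' + 2)))
              (hface s.succ (Fin.succ_ne_zero s))
            have hz2 := isZ_map φ n U ξ y (δ s) (hw 0)
            refine isZ_unique U ξ y hφ e' (SimplexCategory.mk e')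
              (le_of_eq (SimplexCategory.len_mk e')) ((δ s ≫ δ (0 : Fin (e' + 3))) ≫ α) _ _ ?_ ?_
            · rw [hid, Category.assoc]
              exact hz1
            · rw [Category.assoc]
              exact hz2
          · rw [phiNat φ U (δ 0) x, hx2, ← Fcomp G U (δ 0) α y]
            exact (hw 0).2.symm
        rw [key]
        exact hw 0
      have hfaceAll : ∀ t : Fin (e + 2),
          IsZ φ n U ξ y (δ t ≫ α) ((F.map (δ t).op).app U x) := by
        intro t
        by_cases ht : t = 0
        · subst ht; exact hface0
        · exact hface t ht
      refine ⟨x, ?_, hx2⟩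
      have smallkey : ∀ (jj : SimplexCategory), jj.len ≤ n + 1 →
          ∀ (g : jj ⟶ SimplexCategory.mk (e + 1))
          (hg : simplexRank (ULift.up g :
            (SSet.stdSimplex.obj (SimplexCategory.mk (e + 1))).obj (op jj)) ≤ n + 1 + 1),
          (F.map g.op).app U x =
            ξ.1 (op jj) ⟨ULift.up (g ≫ α), le_trans (sRank_comp_le g α) hg⟩ := by
        intro jj hjj g hg
        have hns : ¬ Function.Surjective g.toOrderHom := not_surj_of_rank g (by omega)
        obtain ⟨t, θ', hθ'⟩ := SimplexCategory.eq_comp_δ_of_not_surjective g hns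
        have hz := isZ_map φ n U ξ y θ' (hfaceAll t)
        have hr : simplexRank (ULift.up (𝟙 jj) : (SSet.stdSimplex.obj jj).obj (op jj)) ≤
            n + 1 + 1 := le_trans (sRank_le (𝟙 jj)) (by omega)
        have h1 := hz.1 (op jj) (𝟙 jj) hr
        rw [op_id, F.map_id] at h1
        simp only [NatTrans.id_app, types_id_apply] at h1
        conv_lhs => rw [hθ']
        rw [Fcomp F U θ' (δ t) x, h1]
        refine congrArg (ξ.1 (op jj)) (Subtype.ext (congrArg ULift.up ?_))
        rw [Category.id_comp, hθ', Category.assoc]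
      have key : ∀ (M : ℕ) (jj : SimplexCategory), jj.len ≤ M →
          ∀ (g : jj ⟶ SimplexCategory.mk (e + 1))
          (hg : simplexRank (ULift.up g :
            (SSet.stdSimplex.obj (SimplexCategory.mk (e + 1))).obj (op jj)) ≤ n + 1 + 1),
          (F.map g.op).app U x =
            ξ.1 (op jj) ⟨ULift.up (g ≫ α), le_trans (sRank_comp_le g α) hg⟩ := by
        intro M
        induction M with
        | zero =>
          intro jj hM g hg
          exact smallkey jj (by omega) g hg
        | succ M ihM =>
          intro jj hM g hg
          by_cases hjj : jj.len ≤ n + 1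
          · exact smallkey jj hjj g hg
          · push_neg at hjj
            obtain ⟨p, hp⟩ : ∃ p, jj.len = p + 1 := ⟨jj.len - 1, by omega⟩
            obtain rfl : jj = SimplexCategory.mk (p + 1) := by
              rw [← SimplexCategory.mk_len jj, hp]
            have hmkp : (SimplexCategory.mk p).len = p := SimplexCategory.len_mk _
            have hmkp1 : (SimplexCategory.mk (p + 1)).len = p + 1 := SimplexCategory.len_mk _
            have hni : ¬ Function.Injective g.toOrderHom := not_inj_of_rank g (by omega)
            obtain ⟨i, g', hfact⟩ := SimplexCategory.eq_σ_comp_of_not_injective g hni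
            have hg' : simplexRank (ULift.up g' :
                (SSet.stdSimplex.obj (SimplexCategory.mk (e + 1))).obj
                  (op (SimplexCategory.mk p))) ≤ n + 1 + 1 := by
              have := sRank_sigma_comp i g'
              rw [← hfact] at this
              omega
            have hstep := ihM (SimplexCategory.mk p) (by omega) g' hg'
            conv_lhs => rw [hfact]
            rw [Fcomp F U (σ i) g' x, hstep]
            have hnat := ξ.2 (op (SimplexCategory.mk p)) (op (SimplexCategory.mk (p + 1)))
              (σ i).op ⟨ULift.up (g' ≫ α), le_trans (sRank_comp_le g' α) hg'⟩
            rw [← hnat]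
            refine congrArg (ξ.1 (op (SimplexCategory.mk (p + 1)))) (Subtype.ext ?_)
            show ULift.up (σ i ≫ g' ≫ α) = ULift.up (g ≫ α)
            rw [hfact, Category.assoc]
      intro j g hg
      exact key j.unop.len j.unop le_rfl g hg

end Stmt7Main


end CatCov
open CatCov in
/-- Let `C` be a category with covers, `n ≥ 0`, and `f : X ⟶ Y` an `n`-stack in
`sC`.  Then `f` is `(n+1)`-coskeletal: the canonical map `X ⟶ Csk_{n+1}(f)` is an isomorphism of
simplicial presheaves, i.e. for every level `m` the canonical map
`σᵐ_{n+1}(f) : X_m ⟶ Csk_{n+1,m}(f) = hom(sk_{n+1} Δ[m], X) ×_{hom(sk_{n+1} Δ[m], Y)} Y_m`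
is an isomorphism of presheaves. -/
theorem stmt_7 {C : Type u} [Category.{v} C] (cov : CoversOn C) (n : ℕ)
    {X Y : SimplicialObject C} (f : X ⟶ Y) (hf : IsStack cov n (evMap f)) :
    ∀ m : ℕ, IsIso (cskMapAt (n + 1) m (evMap f)) := by
  intro m
  have hφ := hf.2
  have hb : ∀ (U : Cᵒᵖ), Function.Bijective ((cskMapAt (n + 1) m (evMap f)).app U) := by
    intro U
    constructor
    · intro x x' h
      set ξ : (sHom (stdSk.{v} (n + 1) (SimplexCategory.mk m)) (ev X)).obj U :=
        (restrictAlong (stdSkIncl (n + 1) (SimplexCategory.mk m)) (ev X)).app U x with hξ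
      set y : ((ev Y).obj (op (SimplexCategory.mk m))).obj U :=
        ((evMap f).app (op (SimplexCategory.mk m))).app U x with hy
      have hzx : IsZ (evMap f) n U ξ y (𝟙 (SimplexCategory.mk m)) x := by
        constructor
        · intro j g hg
          show ((ev X).map g.op).app U x =
            ((ev X).map ((g ≫ 𝟙 (SimplexCategory.mk m))).op).app U x
          rw [Category.comp_id]
        · show _ = ((ev Y).map (𝟙 (SimplexCategory.mk m)).op).app U y
          rw [op_id, CategoryTheory.Functor.map_id]
          rfl
      have hzx' : IsZ (evMap f) n U ξ y (𝟙 (SimplexCategory.mk m)) x' := by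
        constructor
        · intro j g hg
          show ((ev X).map g.op).app U x' =
            ((ev X).map ((g ≫ 𝟙 (SimplexCategory.mk m))).op).app U x
          rw [Category.comp_id]
          exact (congrFun (congrFun (congrArg Subtype.val
            (congrArg (fun z => z.1.1) h)) j) ⟨ULift.up g, hg⟩).symm
        · show _ = ((ev Y).map (𝟙 (SimplexCategory.mk m)).op).app U y
          rw [op_id, CategoryTheory.Functor.map_id]
          exact (congrArg (fun z => z.1.2) h).symm
      exact (isZ_unique U ξ y hφ (SimplexCategory.mk m).len (SimplexCategory.mk m) le_rfl
        (𝟙 (SimplexCategory.mk m)) x' x hzx' hzx).symm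
    · rintro ⟨⟨ξ, y⟩, hcond⟩
      obtain ⟨w, hw⟩ := isZ_exists U ξ y hφ hcond m m le_rfl (𝟙 (SimplexCategory.mk m))
      refine ⟨w, Subtype.ext (Prod.ext ?_ ?_)⟩
      · apply Subtype.ext
        funext j a
        have h1 := hw.1 j a.1.down a.2
        show ((ev X).map (a.1.down.op)).app U w = ξ.1 j a
        rw [h1]
        refine congrArg (ξ.1 j) (Subtype.ext ?_)
        show ULift.up (a.1.down ≫ 𝟙 (SimplexCategory.mk m)) = a.1
        rw [Category.comp_id]
        rfl
      · have h2 := hw.2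
        rw [op_id, CategoryTheory.Functor.map_id] at h2
        exact h2
  haveI : ∀ U, IsIso ((cskMapAt (n + 1) m (evMap f)).app U) :=
    fun U => (isIso_iff_bijective _).mpr (hb U)
  exact NatIso.isIso_of_isIso_app _
end

section
/- For every n ≥ 1 and every 0 ≤ i ≤ n, the horn Λⁿ_i is collapsible: the inclusion of the vertex i into Λⁿ_i is an expansion, i.e. there is a finite filtration Δ⁰ ≅ S₀ ⊆ S₁ ⊆ ⋯ ⊆ S_N = Λⁿ_i of simplicial subsets such that for each 0 < ℓ ≤ N there are m_ℓ and j_ℓ with S_ℓ ≅ S_{ℓ−1} ∪_{Λ^{m_ℓ}_{j_ℓ}} Δ^{m_ℓ} (the pushout attaching an m_ℓ-simplex along a horn). -/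
open CategoryTheory CategoryTheory.Limits Opposite Simplicial

/-- The map `Δ[0] ⟶ Λ[n+1, i]` picking out the vertex `i` of the horn. -/
def hornVertex (n : ℕ) (i : Fin (n + 2)) : Δ[0] ⟶ Λ[n + 1, i] :=
  SSet.Subcomplex.lift
    (SSet.stdSimplex.map
      (SimplexCategory.const (SimplexCategory.mk 0) (SimplexCategory.mk (n + 1)) i)) (by
    intro j y hy hcontra
    obtain ⟨α, rfl⟩ := hy
    obtain ⟨x, hx⟩ := exists_ne i
    have hmem : x ∈ Set.range (SSet.stdSimplex.asOrderHom ((SSet.stdSimplex.map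
        (SimplexCategory.const (SimplexCategory.mk 0) (SimplexCategory.mk (n + 1)) i)).app j
          α)) ∪ {i} := by
      rw [hcontra]; exact Set.mem_univ x
    rcases hmem with h | h
    · obtain ⟨y, hy⟩ := h
      exact hx hy.symm
    · exact hx h)

namespace Stmt13Aux

noncomputable section

universe u

/-! ### Generalities on simplices of standard simplices -/

/-- The range of a simplex of a standard simplex, as a `Finset`. -/
def rng {d : ℕ} {m : SimplexCategoryᵒᵖ} (α : Δ[d].obj m) : Finset (Fin (d + 1)) :=
  Finset.image (SSet.stdSimplex.asOrderHom α) Finset.univ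

lemma mem_rng_iff {d : ℕ} {m : SimplexCategoryᵒᵖ} (α : Δ[d].obj m) (x : Fin (d + 1)) :
    x ∈ rng α ↔ ∃ y, SSet.stdSimplex.asOrderHom α y = x := by
  simp [rng]

lemma rng_nonempty {d : ℕ} {m : SimplexCategoryᵒᵖ} (α : Δ[d].obj m) : (rng α).Nonempty :=
  ⟨_, Finset.mem_image_of_mem _ (Finset.mem_univ 0)⟩

lemma asOrderHom_mem_rng {d : ℕ} {m : SimplexCategoryᵒᵖ} (α : Δ[d].obj m) (x) :
    SSet.stdSimplex.asOrderHom α x ∈ rng α :=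
  Finset.mem_image_of_mem _ (Finset.mem_univ x)

lemma asOrderHom_map {d : ℕ} {m m' : SimplexCategoryᵒᵖ} (f : m ⟶ m') (α : Δ[d].obj m)
    (x : Fin (m'.unop.len + 1)) :
    SSet.stdSimplex.asOrderHom (Δ[d].map f α) x = SSet.stdSimplex.asOrderHom α (f.unop.toOrderHom x) := rfl

lemma rng_map_subset {d : ℕ} {m m' : SimplexCategoryᵒᵖ} (f : m ⟶ m') (α : Δ[d].obj m) :
    rng (Δ[d].map f α) ⊆ rng α := by
  intro x hx
  rw [mem_rng_iff] at hx ⊢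
  obtain ⟨y, hy⟩ := hx
  exact ⟨f.unop.toOrderHom y, hy⟩

lemma simplex_ext {d : ℕ} {m : SimplexCategoryᵒᵖ} {α β : Δ[d].obj m}
    (h : ∀ x, SSet.stdSimplex.asOrderHom α x = SSet.stdSimplex.asOrderHom β x) : α = β := by
  apply (SSet.stdSimplex.objEquiv).injective
  apply SimplexCategory.Hom.ext
  exact OrderHom.ext _ _ (funext h)

/-- A subcomplex of `Δ[d]` determined by a collection of "faces" closed under
nonempty subsets. -/
def Sub (d : ℕ) (P : Finset (Fin (d + 1)) → Prop)
    (hP : ∀ ⦃T R : Finset (Fin (d + 1))⦄, P T → R.Nonempty → R ⊆ T → P R) : SSet.{u} where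
  obj m := { α : Δ[d].obj m // P (rng α) }
  map f := TypeCat.ofHom fun a => ⟨Δ[d].map f a.1, hP a.2 (rng_nonempty _) (rng_map_subset f a.1)⟩
  map_id m := by ext a; exact (congrArg (fun φ => φ a.1) (Δ[d].map_id m))
  map_comp f g := by ext a; exact (congrArg (fun φ => φ a.1) (Δ[d].map_comp f g))

/-- Inclusions between subcomplexes. -/
def subMap {d : ℕ} {P Q : Finset (Fin (d + 1)) → Prop} {hP hQ} (h : ∀ T, P T → Q T) :
    Sub.{u} d P hP ⟶ Sub.{u} d Q hQ where
  app m := TypeCat.ofHom fun a => ⟨a.1, h _ a.2⟩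

/-! ### The enumeration of faces to attach -/

/-- The subsets `S` of `Fin (n+2)` to which we attach the simplex `insert i S`. -/
def Ok (n : ℕ) (i : Fin (n + 2)) (S : Finset (Fin (n + 2))) : Prop :=
  i ∉ S ∧ S.Nonempty ∧ S ≠ Finset.univ.erase i

/-- A linear-ordering key: first by cardinality, then arbitrarily. -/
def key {n : ℕ} (S : Finset (Fin (n + 2))) : ℕ ×ₗ ℕ := toLex (S.card, Encodable.encode S)

lemma key_injective {n : ℕ} : Function.Injective (key (n := n)) := fun S S' h =>
  Encodable.encode_injective (congrArg (fun p => (ofLex p).2) h)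

/-- A structure wrapper (to avoid instance clashes with the subtype order). -/
structure OkT (n : ℕ) (i : Fin (n + 2)) where
  S : Finset (Fin (n + 2))
  ok : Ok n i S

lemma OkT.val_injective {n : ℕ} {i : Fin (n + 2)} :
    Function.Injective (OkT.S (n := n) (i := i)) := by
  rintro ⟨a, _⟩ ⟨b, _⟩ h
  cases h
  rfl

instance (n : ℕ) (i : Fin (n + 2)) : LinearOrder (OkT n i) :=
  LinearOrder.lift' (fun S => key S.S) fun a b h => OkT.val_injective (key_injective h)

lemma okLt_iff {n : ℕ} {i : Fin (n + 2)} {a b : OkT n i} :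
    a < b ↔ key a.S < key b.S := Iff.rfl

lemma okLt_of_card_lt {n : ℕ} {i : Fin (n + 2)} {a b : OkT n i}
    (h : a.S.card < b.S.card) : a < b :=
  okLt_iff.mpr (Prod.Lex.lt_iff.mpr (Or.inl h))

noncomputable instance (n : ℕ) (i : Fin (n + 2)) : Fintype (OkT n i) :=
  Fintype.ofInjective OkT.S OkT.val_injective

/-- The number of steps in the filtration. -/
def NN (n : ℕ) (i : Fin (n + 2)) : ℕ := Fintype.card (OkT n i)

/-- The order-preserving enumeration of the faces to attach. -/
def enum (n : ℕ) (i : Fin (n + 2)) : Fin (NN n i) ≃o OkT n i :=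
  monoEquivOfFin _ rfl

/-- The faces present at stage `ℓ` of the filtration. -/
def Stage (n : ℕ) (i : Fin (n + 2)) (ℓ : ℕ) (T : Finset (Fin (n + 2))) : Prop :=
  T = {i} ∨ ∃ k : Fin (NN n i), (k : ℕ) < ℓ ∧ T ⊆ insert i (enum n i k).S

lemma stage_closed (n : ℕ) (i : Fin (n + 2)) (ℓ : ℕ) :
    ∀ ⦃T R : Finset (Fin (n + 2))⦄, Stage n i ℓ T → R.Nonempty → R ⊆ T → Stage n i ℓ R := by
  rintro T R (rfl | ⟨k, hk, hsub⟩) hne hsub'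
  · exact Or.inl (hne.subset_singleton_iff.mp hsub')
  · exact Or.inr ⟨k, hk, hsub'.trans hsub⟩

lemma stage_mono (n : ℕ) (i : Fin (n + 2)) {ℓ ℓ' : ℕ} (h : ℓ ≤ ℓ') {T} :
    Stage n i ℓ T → Stage n i ℓ' T := by
  rintro (h' | ⟨k, hk, hsub⟩)
  exacts [Or.inl h', Or.inr ⟨k, hk.trans_le h, hsub⟩]

lemma ok_of_ssubset {n : ℕ} {i : Fin (n + 2)} {S' S : Finset (Fin (n + 2))} (hok : Ok n i S)
    (h1 : i ∉ S') (h2 : S'.Nonempty) (hss : S' ⊆ S) (hne : S' ≠ S) : Ok n i S' := by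
  refine ⟨h1, h2, fun hcon => ?_⟩
  have hSsub : S ⊆ Finset.univ.erase i := Finset.subset_erase.mpr ⟨Finset.subset_univ S, hok.1⟩
  exact hne (Finset.Subset.antisymm hss (by rw [hcon]; exact hSsub))

lemma index_lt {n : ℕ} {i : Fin (n + 2)} {ℓ : ℕ} (hℓ : ℓ < NN n i) {S' : Finset (Fin (n + 2))}
    (hok' : Ok n i S') (hcard : S'.card < (enum n i ⟨ℓ, hℓ⟩).S.card) :
    (((enum n i).symm ⟨S', hok'⟩ : Fin (NN n i)) : ℕ) < ℓ := by
  have h1 : (enum n i).symm ⟨S', hok'⟩ < (enum n i).symm (enum n i ⟨ℓ, hℓ⟩) :=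
    (enum n i).symm.lt_iff_lt.mpr (okLt_of_card_lt hcard)
  rw [OrderIso.symm_apply_apply] at h1
  exact h1

lemma stage_of_proper {n : ℕ} {i : Fin (n + 2)} {ℓ : ℕ} (hℓ : ℓ < NN n i)
    {R : Finset (Fin (n + 2))} (hne : R.Nonempty)
    (hsub : R ⊆ insert i (enum n i ⟨ℓ, hℓ⟩).S)
    (hT : R ≠ insert i (enum n i ⟨ℓ, hℓ⟩).S) (hS : R ≠ (enum n i ⟨ℓ, hℓ⟩).S) :
    Stage n i ℓ R := by
  set S := (enum n i ⟨ℓ, hℓ⟩).S with hSdef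
  have hokS : Ok n i S := (enum n i ⟨ℓ, hℓ⟩).ok
  by_cases hiR : i ∈ R
  · set S' := R.erase i with hS'
    have hRins : R = insert i S' := (Finset.insert_erase hiR).symm
    have hsub' : S' ⊆ S := by
      intro x hx
      rcases Finset.mem_insert.mp (hsub (Finset.mem_of_mem_erase hx)) with h | h
      · exact absurd h (Finset.ne_of_mem_erase hx)
      · exact h
    rcases eq_or_ne S' ∅ with hS0 | hS0
    · left
      rw [hRins, hS0]
      rfl
    · have hne' : S'.Nonempty := Finset.nonempty_iff_ne_empty.mpr hS0
      have hne'' : S' ≠ S := fun h => hT (by rw [hRins, h])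
      have hok' : Ok n i S' := ok_of_ssubset hokS (Finset.notMem_erase i R) hne' hsub' hne''
      have hcard : S'.card < S.card :=
        Finset.card_lt_card (Finset.ssubset_iff_subset_ne.mpr ⟨hsub', hne''⟩)
      refine Or.inr ⟨(enum n i).symm ⟨S', hok'⟩, index_lt hℓ hok' hcard, ?_⟩
      rw [OrderIso.apply_symm_apply, hRins]
  · have hsubS : R ⊆ S := by
      intro x hx
      rcases Finset.mem_insert.mp (hsub hx) with h | h
      · exact absurd (h ▸ hx) hiR
      · exact h
    have hok' : Ok n i R := ok_of_ssubset hokS hiR hne hsubS hS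
    have hcard : R.card < S.card :=
      Finset.card_lt_card (Finset.ssubset_iff_subset_ne.mpr ⟨hsubS, hS⟩)
    refine Or.inr ⟨(enum n i).symm ⟨R, hok'⟩, index_lt hℓ hok' hcard, ?_⟩
    rw [OrderIso.apply_symm_apply]
    exact Finset.subset_insert _ _

lemma not_stage_of_superset {n : ℕ} {i : Fin (n + 2)} {ℓ : ℕ} (hℓ : ℓ < NN n i)
    {R : Finset (Fin (n + 2))} (hsub : (enum n i ⟨ℓ, hℓ⟩).S ⊆ R) : ¬ Stage n i ℓ R := by
  have hokS : Ok n i (enum n i ⟨ℓ, hℓ⟩).S := (enum n i ⟨ℓ, hℓ⟩).ok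
  rintro (rfl | ⟨k, hk, hMem⟩)
  · obtain ⟨x, hx⟩ := hokS.2.1
    have h2 := hsub hx
    rw [Finset.mem_singleton] at h2
    exact hokS.1 (h2 ▸ hx)
  · have hokS'' : Ok n i (enum n i k).S := (enum n i k).ok
    have hsub3 : (enum n i ⟨ℓ, hℓ⟩).S ⊆ (enum n i k).S := by
      intro x hx
      rcases Finset.mem_insert.mp ((hsub.trans hMem) hx) with h | h
      · exact absurd (h ▸ hx) hokS.1
      · exact h
    have hle : (enum n i ⟨ℓ, hℓ⟩).S.card ≤ (enum n i k).S.card := Finset.card_le_card hsub3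
    have hlt : enum n i k < enum n i ⟨ℓ, hℓ⟩ :=
      (enum n i).lt_iff_lt.mpr (show k < ⟨ℓ, hℓ⟩ from hk)
    rcases Prod.Lex.lt_iff.mp (okLt_iff.mp hlt) with h | ⟨h1, _⟩
    · exact absurd hle (not_le.mpr h)
    · have heq : (enum n i ⟨ℓ, hℓ⟩).S = (enum n i k).S :=
        Finset.eq_of_subset_of_card_le hsub3 (le_of_eq h1)
      have heq2 : enum n i ⟨ℓ, hℓ⟩ = enum n i k := OkT.val_injective heq
      have := (enum n i).injective heq2
      rw [← this] at hk
      exact lt_irrefl ℓ hk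

lemma insert_ne_univ_of_ok {n : ℕ} {i : Fin (n + 2)} {S : Finset (Fin (n + 2))} (hok : Ok n i S)
    {R : Finset (Fin (n + 2))} (hR : R ⊆ insert i S) : insert i R ≠ Finset.univ := by
  have h1 : S ⊆ Finset.univ.erase i := Finset.subset_erase.mpr ⟨Finset.subset_univ S, hok.1⟩
  have herase : (Finset.univ.erase i).card = n + 1 := by
    rw [Finset.card_erase_of_mem (Finset.mem_univ i)]
    simp
  have h2 : S.card < n + 1 := by
    have := Finset.card_lt_card (Finset.ssubset_iff_subset_ne.mpr ⟨h1, hok.2.2⟩)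
    omega
  intro hcon
  have h3 : (insert i R).card ≤ S.card + 1 :=
    le_trans (Finset.card_le_card (Finset.insert_subset_iff.mpr ⟨Finset.mem_insert_self i S, hR⟩))
      (Finset.card_insert_le i S)
  rw [hcon] at h3
  have h4 : (Finset.univ : Finset (Fin (n + 2))).card = n + 2 := by simp
  omega

lemma stage_top_iff (n : ℕ) (i : Fin (n + 2)) {R : Finset (Fin (n + 2))} (hne : R.Nonempty) :
    Stage n i (NN n i) R ↔ insert i R ≠ Finset.univ := by
  constructor
  · rintro (rfl | ⟨k, _, hsub⟩)
    · rw [Finset.insert_eq_self.mpr (Finset.mem_singleton_self i)]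
      intro hcon
      obtain ⟨x, hx⟩ := exists_ne i
      have h2 := Finset.mem_univ x
      rw [← hcon, Finset.mem_singleton] at h2
      exact hx h2
    · exact insert_ne_univ_of_ok (enum n i k).ok hsub
  · intro hcon
    rcases eq_or_ne (R.erase i) ∅ with h0 | h0
    · left
      have hsub : R ⊆ {i} := by
        intro x hx
        rcases eq_or_ne x i with rfl | hxi
        · exact Finset.mem_singleton_self _
        · exact absurd (Finset.mem_erase.mpr ⟨hxi, hx⟩) (by rw [h0]; exact Finset.notMem_empty x)
      exact hne.subset_singleton_iff.mp hsub
    · have hok' : Ok n i (R.erase i) := by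
        refine ⟨Finset.notMem_erase _ _, Finset.nonempty_iff_ne_empty.mpr h0, fun hcon2 => ?_⟩
        apply hcon
        apply Finset.Subset.antisymm (Finset.subset_univ _)
        calc (Finset.univ : Finset (Fin (n + 2)))
            = insert i (Finset.univ.erase i) := (Finset.insert_erase (Finset.mem_univ i)).symm
          _ = insert i (R.erase i) := by rw [hcon2]
          _ ⊆ insert i R := Finset.insert_subset_insert _ (Finset.erase_subset _ _)
      refine Or.inr ⟨(enum n i).symm ⟨R.erase i, hok'⟩, Fin.is_lt _, ?_⟩
      rw [OrderIso.apply_symm_apply]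
      intro x hx
      rcases eq_or_ne x i with rfl | hxi
      · exact Finset.mem_insert_self _ _
      · exact Finset.mem_insert_of_mem (Finset.mem_erase.mpr ⟨hxi, hx⟩)

lemma range_eq_coe_rng {d : ℕ} {m : SimplexCategoryᵒᵖ} (α : Δ[d].obj m) :
    Set.range (SSet.stdSimplex.asOrderHom α) = ↑(rng α) := by
  rw [rng, Finset.coe_image, Finset.coe_univ, Set.image_univ]

lemma horn_cond_iff {d : ℕ} (j : Fin (d + 1)) {m : SimplexCategoryᵒᵖ} (α : Δ[d].obj m) :
    Set.range (SSet.stdSimplex.asOrderHom α) ∪ {j} ≠ Set.univ ↔ insert j (rng α) ≠ Finset.univ := by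
  rw [range_eq_coe_rng, Set.union_singleton, ← Finset.coe_insert]
  constructor
  · intro h hcon
    apply h
    rw [hcon, Finset.coe_univ]
  · intro h hcon
    apply h
    apply Finset.coe_injective
    rw [hcon, Finset.coe_univ]

/-! ### The filtration -/

/-- The `ℓ`-th stage of the filtration of the horn. -/
def A (n : ℕ) (i : Fin (n + 2)) (ℓ : ℕ) : SSet :=
  Sub (n + 1) (Stage n i ℓ) (stage_closed n i ℓ)

/-- The inclusion between consecutive stages. -/
def jmap (n : ℕ) (i : Fin (n + 2)) (ℓ : ℕ) : A n i ℓ ⟶ A n i (ℓ + 1) :=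
  subMap fun _ hT => stage_mono n i (Nat.le_succ ℓ) hT

/-- The underlying simplex of the vertex map. -/
def vtx (n : ℕ) (i : Fin (n + 2)) (m : SimplexCategoryᵒᵖ) (α : Δ[0].obj m) : Δ[n + 1].obj m :=
  (SSet.stdSimplex.map
    (SimplexCategory.const (SimplexCategory.mk 0) (SimplexCategory.mk (n + 1)) i)).app m α

lemma asOrderHom_vtx (n : ℕ) (i : Fin (n + 2)) (m : SimplexCategoryᵒᵖ) (α : Δ[0].obj m)
    (x : Fin (m.unop.len + 1)) : SSet.stdSimplex.asOrderHom (vtx n i m α) x = i := rfl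

lemma rng_vtx (n : ℕ) (i : Fin (n + 2)) (m : SimplexCategoryᵒᵖ) (α : Δ[0].obj m) :
    rng (vtx n i m α) = {i} := by
  ext x
  simp only [mem_rng_iff, Finset.mem_singleton]
  constructor
  · rintro ⟨y, hy⟩
    rw [← hy]
    exact asOrderHom_vtx n i m α y
  · intro hx
    exact ⟨0, (asOrderHom_vtx n i m α 0).trans hx.symm⟩

/-- The vertex map into each stage. -/
def v (n : ℕ) (i : Fin (n + 2)) (ℓ : ℕ) : Δ[0] ⟶ A n i ℓ where
  app m := TypeCat.ofHom fun α => ⟨vtx n i m α, by rw [rng_vtx]; exact Or.inl rfl⟩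
  naturality m m' f := by
    ext α
    apply Subtype.ext
    exact congrArg (fun φ => φ α) ((SSet.stdSimplex.map
      (SimplexCategory.const (SimplexCategory.mk 0) (SimplexCategory.mk (n + 1)) i)).naturality f)

lemma delta0_subsingleton (m : SimplexCategoryᵒᵖ) : Subsingleton (Δ[0].obj m) := by
  constructor
  intro a b
  apply (SSet.stdSimplex.objEquiv).injective
  apply SimplexCategory.Hom.ext
  apply OrderHom.ext
  funext x
  exact @Subsingleton.elim (Fin 1) _ _ _

lemma isIso_v0 (n : ℕ) (i : Fin (n + 2)) : IsIso (v n i 0) := by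
  have : ∀ m, IsIso ((v n i 0).app m) := by
    intro m
    rw [CategoryTheory.isIso_iff_bijective]
    constructor
    · haveI := delta0_subsingleton m
      intro a b _
      exact Subsingleton.elim a b
    · rintro ⟨β, hβ⟩
      have hrng : rng β = {i} := by
        rcases hβ with h | ⟨k, hk, _⟩
        · exact h
        · exact absurd hk (Nat.not_lt_zero _)
      refine ⟨SSet.stdSimplex.objMk (OrderHom.const _ 0), ?_⟩
      apply Subtype.ext
      apply simplex_ext
      intro x
      have h2 : SSet.stdSimplex.asOrderHom β x ∈ rng β := asOrderHom_mem_rng β x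
      rw [hrng, Finset.mem_singleton] at h2
      exact (asOrderHom_vtx n i m _ x).trans h2.symm
  exact NatIso.isIso_of_isIso_app _

/-- The isomorphism between the top of the filtration and the horn. -/
def topIso (n : ℕ) (i : Fin (n + 2)) : A n i (NN n i) ≅ Λ[n + 1, i] :=
  NatIso.ofComponents
    (fun m => Equiv.toIso (Equiv.subtypeEquivRight (fun α =>
      (stage_top_iff n i (rng_nonempty α)).trans (horn_cond_iff i α).symm)))
    (by
      intro m m' f
      ext a
      apply Subtype.ext
      rfl)

lemma compat (n : ℕ) (i : Fin (n + 2)) :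
    v n i (NN n i) ≫ (topIso n i).hom = hornVertex n i := by
  apply SSet.hom_ext
  intro m
  ext α
  apply Subtype.ext
  rfl

/-! ### Pushout criteria -/

/-- A sufficient criterion for a square of types to be a pushout. -/
lemma types_isPushout {Z X Y P : Type u} {f : Z ⟶ X} {g : Z ⟶ Y} {h : X ⟶ P} {k : Y ⟶ P}
    (comm : f ≫ h = g ≫ k) (hkinj : Function.Injective k) (hhinj : Function.Injective h)
    (hsurj : ∀ p, (∃ y, k y = p) ∨ ∃ x, h x = p)
    (hpull : ∀ x y, h x = k y → ∃ z, f z = x) :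
    IsPushout f g h k := by
  classical
  have comm' : ∀ z, h (f z) = k (g z) := fun z => congrArg (fun φ => φ z) comm
  let desc : ∀ s : PushoutCocone f g, P → s.pt := fun s p =>
    if hp : ∃ y, k y = p then s.inr hp.choose
    else s.inl ((hsurj p).resolve_left hp).choose
  have hdesc_r : ∀ (s : PushoutCocone f g) (y : Y), desc s (k y) = s.inr y := by
    intro s y
    have hp : ∃ y', k y' = k y := ⟨y, rfl⟩
    simp only [desc, dif_pos hp]
    exact congrArg s.inr (hkinj hp.choose_spec)
  have hdesc_l : ∀ (s : PushoutCocone f g) (x : X), desc s (h x) = s.inl x := by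
    intro s x
    have scond : ∀ z, s.inl (f z) = s.inr (g z) := fun z => congrArg (fun φ => φ z) s.condition
    by_cases hp : ∃ y, k y = h x
    · obtain ⟨z, hz⟩ := hpull x hp.choose hp.choose_spec.symm
      have hgz : g z = hp.choose := hkinj (by rw [← comm' z, hz, hp.choose_spec])
      simp only [desc, dif_pos hp]
      rw [← hgz, ← scond z, hz]
    · simp only [desc, dif_neg hp]
      exact congrArg s.inl (hhinj ((hsurj (h x)).resolve_left hp).choose_spec)
  refine ⟨⟨comm⟩, ⟨PushoutCocone.IsColimit.mk comm (fun s => TypeCat.ofHom (desc s))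
    (fun s => ConcreteCategory.hom_ext _ _ (hdesc_l s))
    (fun s => ConcreteCategory.hom_ext _ _ (hdesc_r s)) ?_⟩⟩
  intro s mfun hl hr
  apply ConcreteCategory.hom_ext
  intro p
  rcases hsurj p with ⟨y, rfl⟩ | ⟨x, rfl⟩
  · show mfun (k y) = desc s (k y)
    rw [hdesc_r]
    exact congrArg (fun φ => φ y) hr
  · show mfun (h x) = desc s (h x)
    rw [hdesc_l]
    exact congrArg (fun φ => φ x) hl

/-- A levelwise pushout of simplicial sets is a pushout. -/
lemma ssets_isPushout {X Y Z W : SSet} {f : X ⟶ Y} {g : X ⟶ Z} {h : Y ⟶ W} {k : Z ⟶ W}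
    (H : ∀ m, IsPushout (f.app m) (g.app m) (h.app m) (k.app m)) : IsPushout f g h k := by
  have comm : f ≫ h = g ≫ k := NatTrans.ext (funext fun m => (H m).w)
  refine ⟨⟨comm⟩, ⟨evaluationJointlyReflectsColimits _ fun m => ?_⟩⟩
  exact (isColimitMapCoconePushoutCoconeEquiv ((evaluation _ _).obj m) comm).symm
    (H m).isColimit

/-! ### Attaching a simplex along a horn at step `ℓ` -/

section Step

variable (n : ℕ) (i : Fin (n + 2)) {ℓ : ℕ}

/-- The set `S` attached at step `ℓ`. -/
def Sl (hℓ : ℓ < NN n i) : Finset (Fin (n + 2)) := (enum n i ⟨ℓ, hℓ⟩).S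

/-- The simplex `T = insert i S` attached at step `ℓ`. -/
def Tl (hℓ : ℓ < NN n i) : Finset (Fin (n + 2)) := insert i (Sl n i hℓ)

lemma okSl (hℓ : ℓ < NN n i) : Ok n i (Sl n i hℓ) := (enum n i ⟨ℓ, hℓ⟩).ok

/-- The dimension parameter of the simplex attached at step `ℓ`. -/
def ml (hℓ : ℓ < NN n i) : ℕ := (Sl n i hℓ).card - 1

lemma card_Tl (hℓ : ℓ < NN n i) : (Tl n i hℓ).card = ml n i hℓ + 2 := by
  have h1 : (Sl n i hℓ).card ≠ 0 := Finset.card_ne_zero_of_mem (okSl n i hℓ).2.1.choose_spec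
  rw [Tl, Finset.card_insert_of_notMem (okSl n i hℓ).1, ml]
  omega

/-- The order isomorphism between `Fin (m+2)` and the vertices of the attached simplex. -/
def ψ (hℓ : ℓ < NN n i) : Fin (ml n i hℓ + 2) ≃o {x // x ∈ Tl n i hℓ} :=
  (Tl n i hℓ).orderIsoOfFin (card_Tl n i hℓ)

/-- The vertex embedding of the attached simplex. -/
def embO (hℓ : ℓ < NN n i) : Fin (ml n i hℓ + 2) →o Fin (n + 2) where
  toFun x := (ψ n i hℓ x : Fin (n + 2))
  monotone' a b hab := (ψ n i hℓ).monotone hab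

lemma embO_injective (hℓ : ℓ < NN n i) : Function.Injective (embO n i hℓ) := fun a b hab =>
  (ψ n i hℓ).injective (Subtype.ext hab)

lemma embO_mem (hℓ : ℓ < NN n i) (x : Fin (ml n i hℓ + 2)) : embO n i hℓ x ∈ Tl n i hℓ :=
  (ψ n i hℓ x).2

/-- The distinguished vertex of the attached simplex. -/
def ql (hℓ : ℓ < NN n i) : Fin (ml n i hℓ + 2) :=
  (ψ n i hℓ).symm ⟨i, Finset.mem_insert_self i _⟩

lemma embO_ql (hℓ : ℓ < NN n i) : embO n i hℓ (ql n i hℓ) = i :=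
  congrArg Subtype.val ((ψ n i hℓ).apply_symm_apply _)

/-- The underlying simplex map of the attaching maps. -/
def push (hℓ : ℓ < NN n i) {m : SimplexCategoryᵒᵖ} (α : Δ[ml n i hℓ + 1].obj m) :
    Δ[n + 1].obj m :=
  SSet.stdSimplex.objMk ((embO n i hℓ).comp (SSet.stdSimplex.asOrderHom α))

lemma asOrderHom_push (hℓ : ℓ < NN n i) {m : SimplexCategoryᵒᵖ} (α : Δ[ml n i hℓ + 1].obj m)
    (x : Fin (m.unop.len + 1)) :
    SSet.stdSimplex.asOrderHom (push n i hℓ α) x = embO n i hℓ (SSet.stdSimplex.asOrderHom α x) := rfl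

lemma rng_push (hℓ : ℓ < NN n i) {m : SimplexCategoryᵒᵖ} (α : Δ[ml n i hℓ + 1].obj m) :
    rng (push n i hℓ α) = Finset.image (embO n i hℓ) (rng α) := by
  rw [rng, rng, Finset.image_image]
  rfl

lemma push_natural (hℓ : ℓ < NN n i) {m m' : SimplexCategoryᵒᵖ} (φ : m ⟶ m')
    (α : Δ[ml n i hℓ + 1].obj m) :
    push n i hℓ (Δ[ml n i hℓ + 1].map φ α) = Δ[n + 1].map φ (push n i hℓ α) :=
  simplex_ext fun _ => rfl

lemma push_injective (hℓ : ℓ < NN n i) {m : SimplexCategoryᵒᵖ}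
    {α β : Δ[ml n i hℓ + 1].obj m} (h : push n i hℓ α = push n i hℓ β) : α = β := by
  apply simplex_ext
  intro x
  apply embO_injective n i hℓ
  exact congrFun (congrArg (fun γ y => (SSet.stdSimplex.asOrderHom γ y : Fin (n + 2))) h) x

lemma rng_push_subset_Tl (hℓ : ℓ < NN n i) {m : SimplexCategoryᵒᵖ}
    (α : Δ[ml n i hℓ + 1].obj m) : rng (push n i hℓ α) ⊆ Tl n i hℓ := by
  rw [rng_push]
  intro t ht
  rcases Finset.mem_image.mp ht with ⟨x, _, rfl⟩
  exact embO_mem n i hℓ x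

/-- The map attaching the top simplex at step `ℓ`. -/
def bAtt (hℓ : ℓ < NN n i) : Δ[ml n i hℓ + 1] ⟶ A n i (ℓ + 1) where
  app m := TypeCat.ofHom fun α => ⟨push n i hℓ α,
    Or.inr ⟨⟨ℓ, hℓ⟩, Nat.lt_succ_self ℓ, rng_push_subset_Tl n i hℓ α⟩⟩
  naturality m m' φ := by
    ext α
    exact Subtype.ext (push_natural n i hℓ φ α)

lemma stage_push_of_horn (hℓ : ℓ < NN n i) {m : SimplexCategoryᵒᵖ}
    (β : Δ[ml n i hℓ + 1].obj m)
    (hβ : Set.range (SSet.stdSimplex.asOrderHom β) ∪ {ql n i hℓ} ≠ Set.univ) :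
    Stage n i ℓ (rng (push n i hℓ β)) := by
  have hcond : insert (ql n i hℓ) (rng β) ≠ Finset.univ := (horn_cond_iff _ β).mp hβ
  have hex : ∃ x, x ∉ insert (ql n i hℓ) (rng β) := by
    by_contra hcontra
    push_neg at hcontra
    exact hcond (Finset.eq_univ_iff_forall.mpr hcontra)
  obtain ⟨x, hx⟩ := hex
  have hxq : x ≠ ql n i hℓ := fun h => hx (h ▸ Finset.mem_insert_self _ _)
  have hxr : x ∉ rng β := fun h => hx (Finset.mem_insert_of_mem h)
  have hnotmem : embO n i hℓ x ∉ rng (push n i hℓ β) := by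
    intro hmem
    rw [rng_push] at hmem
    rcases Finset.mem_image.mp hmem with ⟨y, hy, hxy⟩
    exact hxr (by rwa [embO_injective n i hℓ hxy] at hy)
  apply stage_of_proper hℓ (rng_nonempty _) (rng_push_subset_Tl n i hℓ β)
  · intro hcon
    exact hnotmem (by rw [hcon]; exact embO_mem n i hℓ x)
  · intro hcon
    have hxi : embO n i hℓ x ≠ i := fun h =>
      hxq (embO_injective n i hℓ (h.trans (embO_ql n i hℓ).symm))
    have h2 : embO n i hℓ x ∈ Sl n i hℓ := by
      rcases Finset.mem_insert.mp (embO_mem n i hℓ x) with h | h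
      · exact absurd h hxi
      · exact h
    exact hnotmem (by rw [hcon]; exact h2)

/-- The map attaching the horn at step `ℓ`. -/
def aAtt (hℓ : ℓ < NN n i) : (Λ[ml n i hℓ + 1, ql n i hℓ] : SSet) ⟶ A n i ℓ where
  app m := TypeCat.ofHom fun β => ⟨push n i hℓ β.1, stage_push_of_horn n i hℓ β.1 β.2⟩
  naturality m m' φ := by
    ext β
    exact Subtype.ext (push_natural n i hℓ φ β.1)

lemma isPushout_step (hℓ : ℓ < NN n i) :
    IsPushout ((Λ[ml n i hℓ + 1, ql n i hℓ]).ι) (aAtt n i hℓ) (bAtt n i hℓ)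
      (jmap n i ℓ) := by
  apply ssets_isPushout
  intro m
  apply types_isPushout
  · ext β
    exact Subtype.ext rfl
  · intro a b hab
    have h2 : (((jmap n i ℓ).app m a : (A n i (ℓ+1)).obj m)).1 = ((jmap n i ℓ).app m b).1 :=
      congrArg Subtype.val hab
    exact Subtype.ext h2
  · intro a b hab
    have h2 : ((bAtt n i hℓ).app m a).1 = ((bAtt n i hℓ).app m b).1 := congrArg Subtype.val hab
    exact push_injective n i hℓ h2
  · rintro ⟨β, hβ⟩
    by_cases hst : Stage n i ℓ (rng β)
    · exact Or.inl ⟨⟨β, hst⟩, Subtype.ext rfl⟩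
    · right
      have hsub : rng β ⊆ Tl n i hℓ := by
        rcases hβ with h | ⟨k, hk, hsubk⟩
        · exact absurd (Or.inl h) hst
        · rcases Nat.lt_succ_iff_lt_or_eq.mp hk with h | h
          · exact absurd (Or.inr ⟨k, h, hsubk⟩) hst
          · have hkeq : k = ⟨ℓ, hℓ⟩ := Fin.ext h
            rw [hkeq] at hsubk
            exact hsubk
      refine ⟨SSet.stdSimplex.objMk
        ⟨fun x => (ψ n i hℓ).symm ⟨SSet.stdSimplex.asOrderHom β x, hsub (asOrderHom_mem_rng β x)⟩,
          fun a b hab => (ψ n i hℓ).symm.monotone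
            (Subtype.mk_le_mk.mpr ((SSet.stdSimplex.asOrderHom β).monotone hab))⟩,
        Subtype.ext ?_⟩
      apply simplex_ext
      intro x
      exact congrArg Subtype.val ((ψ n i hℓ).apply_symm_apply
        ⟨SSet.stdSimplex.asOrderHom β x, hsub (asOrderHom_mem_rng β x)⟩)
  · rintro α ⟨β, hstβ⟩ hab
    have hval : push n i hℓ α = β := congrArg Subtype.val hab
    by_contra hcon
    have hhc : ¬ (Set.range (SSet.stdSimplex.asOrderHom α) ∪ {ql n i hℓ} ≠ Set.univ) := fun hc =>
      hcon ⟨⟨α, hc⟩, rfl⟩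
    have huniv : insert (ql n i hℓ) (rng α) = Finset.univ := by
      by_contra h
      exact hhc ((horn_cond_iff _ _).mpr h)
    have hS : (enum n i ⟨ℓ, hℓ⟩).S ⊆ rng β := by
      intro s hs
      have hsT : s ∈ Tl n i hℓ := Finset.mem_insert_of_mem hs
      obtain ⟨t, rfl⟩ : ∃ t, embO n i hℓ t = s :=
        ⟨(ψ n i hℓ).symm ⟨s, hsT⟩, congrArg Subtype.val ((ψ n i hℓ).apply_symm_apply _)⟩
      rcases Finset.mem_insert.mp (by rw [huniv]; exact Finset.mem_univ t) with h | h
      · exfalso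
        subst h
        rw [embO_ql] at hs
        exact (okSl n i hℓ).1 hs
      · rw [← hval, rng_push]
        exact Finset.mem_image_of_mem _ h
    exact not_stage_of_superset hℓ hS hstβ

end Step

end

end Stmt13Aux

/-- For every `n ≥ 1` and every `0 ≤ i ≤ n`, the horn `Λⁿ_i` is *collapsible*:
the inclusion of the vertex `i` into `Λⁿ_i` is an *expansion*, i.e. there is a finite filtration
`Δ⁰ ≅ S₀ ⊆ S₁ ⊆ ⋯ ⊆ S_N = Λⁿ_i` of simplicial subsets such that each step `S_ℓ ⊆ S_{ℓ+1}` is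
obtained by attaching a simplex along a horn (a pushout `S_{ℓ+1} ≅ S_ℓ ∪_{Λ^{m}_{q}} Δ^{m}`).
(Here `n ≥ 1` is expressed by writing the horn as `Λ[n+1, i]`.) -/
theorem stmt_13 (n : ℕ) (i : Fin (n + 2)) :
    ∃ (N : ℕ) (A : ℕ → SSet) (j : ∀ ℓ, A ℓ ⟶ A (ℓ + 1)) (v : ∀ ℓ, Δ[0] ⟶ A ℓ)
      (e : A N ≅ Λ[n + 1, i]),
      IsIso (v 0) ∧
      (∀ ℓ, ℓ < N → v ℓ ≫ j ℓ = v (ℓ + 1)) ∧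
      (∀ ℓ, ℓ < N → Mono (j ℓ)) ∧
      (∀ ℓ, ℓ < N → ∃ (m : ℕ) (q : Fin (m + 2)) (a : (Λ[m + 1, q] : SSet) ⟶ A ℓ)
        (b : Δ[m + 1] ⟶ A (ℓ + 1)),
        IsPushout ((Λ[m + 1, q]).ι) a b (j ℓ)) ∧
      v N ≫ e.hom = hornVertex n i := by
  refine ⟨Stmt13Aux.NN n i, Stmt13Aux.A n i, Stmt13Aux.jmap n i, Stmt13Aux.v n i,
    Stmt13Aux.topIso n i, Stmt13Aux.isIso_v0 n i, fun ℓ _ => ?_, fun ℓ _ => ?_,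
    fun ℓ hℓ => ?_, Stmt13Aux.compat n i⟩
  · apply SSet.hom_ext
    intro m
    ext α
    exact Subtype.ext rfl
  · haveI : ∀ m, Mono ((Stmt13Aux.jmap n i ℓ).app m) := by
      intro m
      rw [CategoryTheory.mono_iff_injective]
      intro a b hab
      have h2 : (((Stmt13Aux.jmap n i ℓ).app m a :
          (Stmt13Aux.A n i (ℓ+1)).obj m)).1 = ((Stmt13Aux.jmap n i ℓ).app m b).1 :=
        congrArg Subtype.val hab
      exact Subtype.ext h2
    exact NatTrans.mono_of_mono_app _
  · exact ⟨Stmt13Aux.ml n i hℓ, Stmt13Aux.ql n i hℓ, Stmt13Aux.aAtt n i hℓ,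
      Stmt13Aux.bAtt n i hℓ, Stmt13Aux.isPushout_step n i hℓ⟩
end

section
/- Minimal Kan fibrations of simplicial sets do not compose: let G be a nontrivial group, let NG = W̄G be its nerve, and let G//G be the homotopy quotient of G acting on itself by left translation, with the projection π : G//G → NG forgetting the first coordinate. Then π : G//G → NG and the unique map NG → Δ⁰ are both minimal Kan fibrations of simplicial sets, but the composite G//G → Δ⁰ is a Kan fibration that is not minimal. -/
open CategoryTheory CategoryTheory.Limits Opposite Simplicial

universe u

noncomputable section

variable {G : Type u} [Group G]

/-- Auxiliary recursion: `vtxN g i = g_{n-1} · g_{n-2} · ⋯ · g_{n-i}` for `i ≤ n`. -/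
def vtxN {n : ℕ} (g : Fin n → G) : ℕ → G := fun i => match i with
  | 0 => 1
  | i + 1 => vtxN g i * (if h : i < n then g ⟨n - 1 - i, by omega⟩ else 1)

/-- The "vertex" partial products of a tuple `(g_{n-1}, …, g₀) ∈ Gⁿ` (encoded as a function
`g : Fin n → G`, with `g k` the entry `g_k`): `vtx g i = g_{n-1} · g_{n-2} · ⋯ · g_{n-i}`.
These are the edges from the `0`-th vertex in the corresponding simplex of the nerve. -/
def vtx {n : ℕ} (g : Fin n → G) (i : Fin (n + 1)) : G := vtxN g i

/-- The action of a simplicial operator `ψ : [m] → [n]` on the `n`-simplices `Gⁿ` of the nerve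
`NG = W̄G`, written in closed form via the vertex products `vtx`:
`(ψ^* g)_k = vtx g (ψ(m−k−1))⁻¹ · vtx g (ψ(m−k))`.  On the face and degeneracy operators this
specializes to the formulas of `W̄G`. -/
def nerveMapFn {m n : ℕ} (ψ : Fin (m + 1) →o Fin (n + 1)) (g : Fin n → G) : Fin m → G :=
  fun k =>
    (vtx g (ψ ⟨m - 1 - (k : ℕ), by have := k.isLt; omega⟩))⁻¹ *
      vtx g (ψ ⟨m - (k : ℕ), by have := k.isLt; omega⟩)

lemma vtxN_succ_of_lt {n : ℕ} (g : Fin n → G) {i : ℕ} (h : i < n) :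
    vtxN g (i + 1) = vtxN g i * g ⟨n - 1 - i, by omega⟩ := by
  rw [vtxN, dif_pos h]

lemma vtx_nerveMapFn {m n : ℕ} (ψ : Fin (m + 1) →o Fin (n + 1)) (g : Fin n → G)
    (i : ℕ) (hi : i < m + 1) :
    vtxN (nerveMapFn ψ g) i = (vtx g (ψ 0))⁻¹ * vtx g (ψ ⟨i, hi⟩) := by
  induction i with
  | zero =>
      have h0 : (⟨0, hi⟩ : Fin (m + 1)) = 0 := rfl
      rw [h0, vtxN]
      exact (inv_mul_cancel _).symm
  | succ i ih =>
      have him : i < m := by omega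
      rw [vtxN_succ_of_lt (nerveMapFn ψ g) him, ih (by omega)]
      show _ * ((vtx g (ψ ⟨m - 1 - (m - 1 - i), _⟩))⁻¹ * vtx g (ψ ⟨m - (m - 1 - i), _⟩)) = _
      have e1 : (⟨m - 1 - (m - 1 - i), by omega⟩ : Fin (m + 1)) = ⟨i, by omega⟩ :=
        Fin.ext (by simp; omega)
      have e2 : (⟨m - (m - 1 - i), by omega⟩ : Fin (m + 1)) = ⟨i + 1, by omega⟩ :=
        Fin.ext (by simp; omega)
      rw [e1, e2, mul_assoc, mul_inv_cancel_left]

lemma nerveMapFn_id {n : ℕ} (g : Fin n → G) :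
    nerveMapFn (OrderHom.id : Fin (n + 1) →o Fin (n + 1)) g = g := by
  funext k
  show (vtxN g (n - 1 - (k : ℕ)))⁻¹ * vtxN g (n - (k : ℕ)) = g k
  have hk := k.isLt
  have h2 : n - (k : ℕ) = (n - 1 - (k : ℕ)) + 1 := by omega
  rw [h2, vtxN_succ_of_lt g (by omega : n - 1 - (k : ℕ) < n), inv_mul_cancel_left]
  exact congrArg g (Fin.ext (by simp; omega))

lemma nerveMapFn_comp {m' m n : ℕ} (φ : Fin (m + 1) →o Fin (n + 1))
    (ψ : Fin (m' + 1) →o Fin (m + 1)) (g : Fin n → G) :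
    nerveMapFn (φ.comp ψ) g = nerveMapFn ψ (nerveMapFn φ g) := by
  funext k
  have hk := k.isLt
  show (vtx g (φ (ψ ⟨m' - 1 - (k : ℕ), by omega⟩)))⁻¹ * vtx g (φ (ψ ⟨m' - (k : ℕ), by omega⟩))
      = (vtxN (nerveMapFn φ g) ((ψ ⟨m' - 1 - (k : ℕ), by omega⟩ : Fin (m + 1)) : ℕ))⁻¹ *
        vtxN (nerveMapFn φ g) ((ψ ⟨m' - (k : ℕ), by omega⟩ : Fin (m + 1)) : ℕ)
  rw [vtx_nerveMapFn φ g _ (ψ ⟨m' - 1 - (k : ℕ), by omega⟩).isLt,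
      vtx_nerveMapFn φ g _ (ψ ⟨m' - (k : ℕ), by omega⟩).isLt]
  rw [mul_inv_rev, inv_inv, mul_assoc, mul_inv_cancel_left]

/-- The nerve `NG = W̄G` of the group `G`, with `n`-simplices `Gⁿ`. -/
def NerveG (G : Type u) [Group G] : SSet.{u} where
  obj j := Fin j.unop.len → G
  map β := TypeCat.ofHom fun g => nerveMapFn β.unop.toOrderHom g
  map_id j := by
    apply ConcreteCategory.hom_ext
    intro g
    exact nerveMapFn_id g
  map_comp {j j' j''} β γ := by
    apply ConcreteCategory.hom_ext
    intro g
    exact nerveMapFn_comp β.unop.toOrderHom γ.unop.toOrderHom g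

/-- The homotopy quotient `G//G` of `G` acting on itself by left translation, with `n`-simplices
`G × Gⁿ` written `(x; g_{n−1},…,g₀)`; the simplicial operator `ψ : [m] → [n]` acts by
`ψ^*(x; g) = (vtx g (ψ 0)⁻¹ · x ; ψ^* g)`, which on face and degeneracy operators specializes to
`d₀(x; g_{n−1},…,g₀) = (g_{n−1}⁻¹·x; d₀ g)`, `d_i(x; g) = (x; d_i g)` for `i > 0`, and
`s_i(x; g) = (x; s_i g)`. -/
def ActionG (G : Type u) [Group G] : SSet.{u} where
  obj j := G × (Fin j.unop.len → G)
  map β := TypeCat.ofHom fun p => ((vtx p.2 (β.unop.toOrderHom 0))⁻¹ * p.1, nerveMapFn β.unop.toOrderHom p.2)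
  map_id j := by
    apply ConcreteCategory.hom_ext
    intro p
    refine Prod.ext ?_ ?_
    · show (vtxN p.2 ((0 : Fin (j.unop.len + 1)) : ℕ))⁻¹ * p.1 = p.1
      show (vtxN p.2 0)⁻¹ * p.1 = p.1
      rw [vtxN]
      simp
    · exact nerveMapFn_id p.2
  map_comp {j j' j''} β γ := by
    apply ConcreteCategory.hom_ext
    intro p
    refine Prod.ext ?_ ?_
    · show (vtx p.2 ((β.unop.toOrderHom.comp γ.unop.toOrderHom) 0))⁻¹ * p.1
          = (vtxN (nerveMapFn β.unop.toOrderHom p.2) ((γ.unop.toOrderHom 0 : Fin _) : ℕ))⁻¹ *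
              ((vtx p.2 (β.unop.toOrderHom 0))⁻¹ * p.1)
      rw [vtx_nerveMapFn β.unop.toOrderHom p.2 _ (γ.unop.toOrderHom 0).isLt]
      rw [mul_inv_rev, inv_inv, mul_assoc, mul_inv_cancel_left]
      rfl
    · exact nerveMapFn_comp β.unop.toOrderHom γ.unop.toOrderHom p.2

/-- The projection `π : G//G ⟶ NG` forgetting the first coordinate. -/
def projG (G : Type u) [Group G] : ActionG G ⟶ NerveG G where
  app _ := TypeCat.ofHom fun p => p.2
  naturality _ _ _ := rfl

lemma hom_to_zero_eq {x : SimplexCategory} (f g : x ⟶ SimplexCategory.mk 0) : f = g := by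
  apply SimplexCategory.Hom.ext
  apply OrderHom.ext
  funext t
  apply Fin.ext
  have h1 := (f.toOrderHom t).isLt
  have h2 := (g.toOrderHom t).isLt
  simp only [SimplexCategory.len_mk, Nat.lt_one_iff] at h1 h2
  omega

/-- The unique map from a simplicial set to `Δ[0]`. -/
def toPt (X : SSet.{u}) : X ⟶ Δ[0] where
  app j := TypeCat.ofHom fun _ => ULift.up (SimplexCategory.const j.unop (SimplexCategory.mk 0) 0)
  naturality j j' β := by
    apply ConcreteCategory.hom_ext
    intro x
    exact congrArg ULift.up (hom_to_zero_eq _ _)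

/-- A map of simplicial sets is a Kan fibration if every horn-lifting problem has a solution. -/
def IsKanFibSSet {X Y : SSet.{u}} (p : X ⟶ Y) : Prop :=
  ∀ (n : ℕ) (i : Fin (n + 2)) (u : (Λ[n + 1, i] : SSet.{u}) ⟶ X) (v : Δ[n + 1] ⟶ Y),
    u ≫ p = Λ[n + 1, i].ι ≫ v →
    ∃ w : Δ[n + 1] ⟶ X, Λ[n + 1, i].ι ≫ w = u ∧ w ≫ p = v

/-- The two vertices `Δ[n] ⟶ Δ[1]`. -/
def vert (n : ℕ) (k : Fin 2) : (Δ[n] : SSet.{u}) ⟶ Δ[1] :=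
  SSet.stdSimplex.map (SimplexCategory.const (SimplexCategory.mk n) (SimplexCategory.mk 1) k)

/-- `x` and `y` are homotopic rel `∂Δ[n]` over `Y` (with respect to `p : X ⟶ Y`): there is a
homotopy `H : Δ[n] × Δ[1] ⟶ X` from `x` to `y` which is constant on `∂Δ[n] × Δ[1]` and satisfies
`p ∘ H = p(x) ∘ pr_{Δ[n]}`. -/
def HtpyRelBdryOver {X Y : SSet.{u}} (p : X ⟶ Y) {n : ℕ} (x y : (Δ[n] : SSet.{u}) ⟶ X) : Prop :=
  ∃ H : (Δ[n] : SSet.{u}) ⨯ (Δ[1] : SSet.{u}) ⟶ X,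
    prod.lift (𝟙 (Δ[n] : SSet.{u})) (vert n 0) ≫ H = x ∧
    prod.lift (𝟙 (Δ[n] : SSet.{u})) (vert n 1) ≫ H = y ∧
    prod.map (∂Δ[n].ι) (𝟙 (Δ[1] : SSet.{u})) ≫ H =
      prod.fst ≫ ∂Δ[n].ι ≫ x ∧
    H ≫ p = prod.fst ≫ x ≫ p

/-- A Kan fibration `p : X ⟶ Y` is *minimal* if any two `n`-simplices with the same boundary and
the same image under `p` which are homotopic rel boundary over `Y` are equal. -/
def IsMinimalKanFib {X Y : SSet.{u}} (p : X ⟶ Y) : Prop :=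
  IsKanFibSSet p ∧
    ∀ (n : ℕ) (x y : (Δ[n] : SSet.{u}) ⟶ X),
      ∂Δ[n].ι ≫ x = ∂Δ[n].ι ≫ y →
      x ≫ p = y ≫ p → HtpyRelBdryOver p x y → x = y

namespace Stmt19

open SSet SimplexCategory

/-- ℕ-level coface map. -/
def nd (j l : ℕ) : ℕ := if l < j then l else l + 1

lemma coe_δ {m : ℕ} (j : Fin (m + 2)) (t : Fin (m + 1)) :
    (((SimplexCategory.δ j).toOrderHom t) : ℕ) = nd j t := by
  show ((j.succAbove t : Fin (m + 2)) : ℕ) = nd j t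
  unfold nd
  rcases Nat.lt_or_ge (t : ℕ) (j : ℕ) with h | h
  · rw [Fin.succAbove_of_castSucc_lt _ _ (by simpa [Fin.lt_iff_val_lt_val] using h)]
    simp [if_pos h]
  · rw [Fin.succAbove_of_le_castSucc _ _ (by simpa [Fin.le_iff_val_le_val] using h)]
    simp [if_neg (Nat.not_lt.2 h)]

variable {X : SSet.{u}}

/-- Evaluation of a map `Δ[n] ⟶ X` at the identity simplex. -/
def ev {n : ℕ} (f : Δ[n] ⟶ X) : X.obj (op (SimplexCategory.mk n)) :=
  f.app _ (stdSimplex.objEquiv.symm (𝟙 _))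

/-- The map `Δ[n] ⟶ X` determined by an `n`-simplex of `X`. -/
def ptMap {n : ℕ} (A : X.obj (op (SimplexCategory.mk n))) : Δ[n] ⟶ X where
  app j := TypeCat.ofHom fun σ => X.map (stdSimplex.objEquiv σ).op A
  naturality j j' β := by
    refine ConcreteCategory.hom_ext _ _ fun σ => ?_
    show X.map (β.unop ≫ stdSimplex.objEquiv σ).op A = X.map β (X.map (stdSimplex.objEquiv σ).op A)
    rw [← FunctorToTypes.map_comp_apply]
    rfl

lemma app_eq {n : ℕ} (f : Δ[n] ⟶ X) {j} (σ : Δ[n].obj j) :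
    f.app j σ = X.map (stdSimplex.objEquiv σ).op (ev f) := by
  have h : Δ[n].map (stdSimplex.objEquiv σ).op (stdSimplex.objEquiv.symm (𝟙 _)) = σ :=
    stdSimplex.objEquiv.injective (Category.comp_id (stdSimplex.objEquiv σ))
  conv_lhs => rw [← h]
  exact ConcreteCategory.congr_hom (f.naturality (stdSimplex.objEquiv σ).op)
    (stdSimplex.objEquiv.symm (𝟙 _))

lemma ev_ptMap {n : ℕ} (A : X.obj (op (SimplexCategory.mk n))) : ev (ptMap A) = A := by
  show X.map (stdSimplex.objEquiv.{u} (stdSimplex.objEquiv.{u}.symm (𝟙 (SimplexCategory.mk n)))).op A = A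
  rw [Equiv.apply_symm_apply, op_id, FunctorToTypes.map_id_apply]

lemma hom_ext_ev {n : ℕ} {f g : Δ[n] ⟶ X} (h : ev f = ev g) : f = g := by
  apply SSet.hom_ext; intro j
  refine ConcreteCategory.hom_ext _ _ fun σ => ?_
  rw [app_eq f σ, app_eq g σ, h]

lemma ev_comp {n : ℕ} {Y : SSet.{u}} (f : Δ[n] ⟶ X) (g : X ⟶ Y) :
    ev (f ≫ g) = g.app _ (ev f) := rfl

lemma ev_std {n m : ℕ} (φ : SimplexCategory.mk m ⟶ SimplexCategory.mk n) (f : Δ[n] ⟶ X) :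
    ev (SSet.stdSimplex.map φ ≫ f) = X.map φ.op (ev f) := by
  show f.app _ ((SSet.stdSimplex.map φ).app _ (stdSimplex.objEquiv.symm (𝟙 _))) = _
  rw [app_eq f]
  have : stdSimplex.objEquiv ((SSet.stdSimplex.map φ).app _ (stdSimplex.objEquiv.symm (𝟙 _))) = φ :=
    Category.id_comp φ
  rw [this]

lemma to_pt_unique {Y : SSet.{u}} (f g : Y ⟶ Δ[0]) : f = g := by
  apply SSet.hom_ext; intro j
  refine ConcreteCategory.hom_ext _ _ fun σ => ?_
  exact stdSimplex.objEquiv.injective (hom_to_zero_eq _ _)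

end Stmt19
namespace Stmt19
open SSet SimplexCategory
variable {X : SSet.{u}}

lemma toOrderHom_comp {a b c : SimplexCategory} (f : a ⟶ b) (g : b ⟶ c) (t) :
    (f ≫ g).toOrderHom t = g.toOrderHom (f.toOrderHom t) := rfl

lemma δδ {n : ℕ} {j k : ℕ} (hjk : j < k) (hk : k ≤ n + 2) :
    (δ (⟨j, by omega⟩ : Fin (n + 2)) ≫ δ (⟨k, by omega⟩ : Fin (n + 3)) :
      SimplexCategory.mk n ⟶ SimplexCategory.mk (n + 2)) =
      δ (⟨k - 1, by omega⟩ : Fin (n + 2)) ≫ δ (⟨j, by omega⟩ : Fin (n + 3)) := by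
  apply SimplexCategory.Hom.ext; apply OrderHom.ext; funext t; apply Fin.ext
  have A : (((δ (⟨j, by omega⟩ : Fin (n + 2)) ≫ δ (⟨k, by omega⟩ : Fin (n + 3))).toOrderHom t : ℕ))
      = nd k (nd j (t : ℕ)) :=
    (coe_δ (⟨k, by omega⟩ : Fin (n + 3)) ((δ (⟨j, by omega⟩ : Fin (n + 2))).toOrderHom t)).trans
      (congrArg (nd k) (coe_δ (⟨j, by omega⟩ : Fin (n + 2)) t))
  have B : (((δ (⟨k - 1, by omega⟩ : Fin (n + 2)) ≫ δ (⟨j, by omega⟩ : Fin (n + 3))).toOrderHom t : ℕ))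
      = nd j (nd (k - 1) (t : ℕ)) :=
    (coe_δ (⟨j, by omega⟩ : Fin (n + 3)) ((δ (⟨k - 1, by omega⟩ : Fin (n + 2))).toOrderHom t)).trans
      (congrArg (nd j) (coe_δ (⟨k - 1, by omega⟩ : Fin (n + 2)) t))
  refine A.trans (Eq.trans ?_ B.symm)
  have ht := t.isLt
  unfold nd
  split_ifs <;> omega

lemma face_down {n : ℕ} (i j : Fin (n + 2)) (h : j ≠ i) :
    stdSimplex.objEquiv (horn.face i j h).1 = δ j := rfl

/-- value of a horn map on a face, transported along the inclusion-composite. -/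
lemma comp_ptMap_face {n : ℕ} {i : Fin (n + 2)} (W : X.obj (op (SimplexCategory.mk (n + 1))))
    (j : Fin (n + 2)) (hj : j ≠ i) :
    (Λ[n + 1, i].ι ≫ ptMap W).app _ (horn.face i j hj) = X.map (δ j).op W := rfl

/-- A filler criterion: if a simplex `W` has the faces prescribed by a horn map `u`, then
the corresponding map `Δ[n+1] ⟶ X` restricts to `u` on the horn. -/
lemma horn_filler_crit {n : ℕ} {i : Fin (n + 2)} (u : (Λ[n + 1, i] : SSet.{u}) ⟶ X)
    (W : X.obj (op (SimplexCategory.mk (n + 1))))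
    (h : ∀ (j : Fin (n + 2)) (hj : j ≠ i), X.map (δ j).op W = u.app _ (horn.face i j hj)) :
    Λ[n + 1, i].ι ≫ ptMap W = u := by
  apply horn.hom_ext
  intro j hj
  rw [comp_ptMap_face, h j hj]

lemma horn_naturality {n : ℕ} {i : Fin (n + 2)} (u : (Λ[n + 1, i] : SSet.{u}) ⟶ X)
    {m m' : SimplexCategoryᵒᵖ} (β : m ⟶ m') (σ : (Λ[n + 1, i] : SSet.{u}).obj m) :
    u.app m' ((Λ[n + 1, i] : SSet.{u}).map β σ) = X.map β (u.app m σ) :=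
  ConcreteCategory.congr_hom (u.naturality β) σ

lemma horn_compat {n : ℕ} {i : Fin (n + 3)} (u : (Λ[n + 2, i] : SSet.{u}) ⟶ X) {j k : ℕ}
    (hjk : j < k) (hk : k ≤ n + 2)
    (hji : (⟨j, by omega⟩ : Fin (n + 3)) ≠ i) (hki : (⟨k, by omega⟩ : Fin (n + 3)) ≠ i) :
    X.map (δ (⟨j, by omega⟩ : Fin (n + 2))).op (u.app _ (horn.face i ⟨k, by omega⟩ hki)) =
    X.map (δ (⟨k - 1, by omega⟩ : Fin (n + 2))).op (u.app _ (horn.face i ⟨j, by omega⟩ hji)) := by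
  rw [← horn_naturality u _ (horn.face i ⟨k, by omega⟩ hki),
      ← horn_naturality u _ (horn.face i ⟨j, by omega⟩ hji)]
  apply congrArg
  apply Subtype.ext
  exact stdSimplex.objEquiv.injective (δδ hjk hk)

/-- the `j`-th face of `∂Δ[n+1]`. -/
def bface {n : ℕ} (j : Fin (n + 2)) : (∂Δ[n + 1] : SSet.{u}).obj (op (SimplexCategory.mk n)) :=
  ⟨stdSimplex.objEquiv.symm (δ j), by
    intro h
    obtain ⟨t, ht⟩ := h j
    have ht' : (δ j).toOrderHom t = j := ht
    have := coe_δ j t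
    rw [ht'] at this
    have ht2 := t.isLt
    unfold nd at this
    split_ifs at this <;> omega⟩

lemma bdry_face_eq {n : ℕ} {x y : Δ[n + 1] ⟶ X}
    (h : ∂Δ[n + 1].ι ≫ x = ∂Δ[n + 1].ι ≫ y) (j : Fin (n + 2)) :
    X.map (δ j).op (ev x) = X.map (δ j).op (ev y) := by
  have hb := ConcreteCategory.congr_hom (congrArg (fun f => NatTrans.app f (op (SimplexCategory.mk n))) h) (bface j)
  calc X.map (δ j).op (ev x)
      = (∂Δ[n + 1].ι ≫ x).app _ (bface j) := (app_eq x _).symm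
    _ = (∂Δ[n + 1].ι ≫ y).app _ (bface j) := hb
    _ = X.map (δ j).op (ev y) := app_eq y _

/-- A map `Δ[m] ⟶ ∂Δ[n]` associated with a non-surjective `φ`. -/
def toBdryMap {m n : ℕ} (φ : SimplexCategory.mk m ⟶ SimplexCategory.mk n)
    (hφ : ¬Function.Surjective φ.toOrderHom) : Δ[m] ⟶ (∂Δ[n] : SSet.{u}) where
  app j := TypeCat.ofHom fun σ => ⟨stdSimplex.objEquiv.symm (stdSimplex.objEquiv σ ≫ φ), by
      intro h
      exact hφ (Function.Surjective.of_comp h)⟩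
  naturality j j' β := by
    refine ConcreteCategory.hom_ext _ _ fun σ => ?_
    apply Subtype.ext
    exact congrArg stdSimplex.objEquiv.symm (Category.assoc β.unop (stdSimplex.objEquiv σ) φ)

lemma toBdryMap_comp {m n : ℕ} (φ : SimplexCategory.mk m ⟶ SimplexCategory.mk n)
    (hφ : ¬Function.Surjective φ.toOrderHom) :
    toBdryMap φ hφ ≫ ∂Δ[n].ι = SSet.stdSimplex.map φ := rfl

end Stmt19
namespace Stmt19
open SSet SimplexCategory

lemma vtxN_zero {n : ℕ} (g : Fin n → G) : vtxN g 0 = 1 := rfl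

lemma entry_eq {m : ℕ} (p : Fin m → G) (k : Fin m) :
    p k = (vtxN p (m - 1 - (k : ℕ)))⁻¹ * vtxN p (m - (k : ℕ)) := by
  have hk := k.isLt
  have h := vtxN_succ_of_lt p (show m - 1 - (k : ℕ) < m by omega)
  have e : (⟨m - 1 - (m - 1 - (k : ℕ)), by omega⟩ : Fin m) = k := Fin.ext (by simp; omega)
  rw [e] at h
  rw [show m - (k : ℕ) = (m - 1 - (k : ℕ)) + 1 by omega, h, inv_mul_cancel_left]

lemma eq_of_vtxN {m : ℕ} {p q : Fin m → G} (h : ∀ l, l ≤ m → vtxN p l = vtxN q l) : p = q := by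
  funext k
  have hk := k.isLt
  rw [entry_eq p k, entry_eq q k, h _ (by omega), h _ (by omega)]

lemma vtxN_δ {n : ℕ} (j : Fin (n + 2)) (g : Fin (n + 1) → G) {l : ℕ} (hl : l < n + 1) :
    vtxN (nerveMapFn (δ j).toOrderHom g) l = (vtxN g (nd (j : ℕ) 0))⁻¹ * vtxN g (nd (j : ℕ) l) := by
  rw [vtx_nerveMapFn _ g l hl]
  show (vtxN g (((δ j).toOrderHom 0 : Fin (n + 2)) : ℕ))⁻¹ *
      vtxN g (((δ j).toOrderHom ⟨l, hl⟩ : Fin (n + 2)) : ℕ) = _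
  rw [coe_δ, coe_δ]
  rfl

section Core

variable {n : ℕ} {i : ℕ} (U : ℕ → ℕ → G)

/-- Edge consistency between two faces of a horn, `j < k` case. -/
lemma edge_aux (hn : 1 ≤ n)
    (hC : ∀ j k t : ℕ, j < k → k ≤ n + 1 → j ≠ i → k ≠ i → t ≤ n - 1 →
      (U k (nd j 0))⁻¹ * U k (nd j t) = (U j (nd (k - 1) 0))⁻¹ * U j (nd (k - 1) t))
    {j k p q p' q' : ℕ} (hjk : j < k) (hk : k ≤ n + 1) (hji : j ≠ i) (hki : k ≠ i)
    (hp : p ≤ n) (hq : q ≤ n) (hp' : p' ≤ n) (hq' : q' ≤ n)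
    (h1 : nd j p = nd k p') (h2 : nd j q = nd k q') :
    (U j p)⁻¹ * U j q = (U k p')⁻¹ * U k q' := by
  set s : ℕ := if nd j p < j then nd j p else if nd j p < k then nd j p - 1 else nd j p - 2 with hs
  set t : ℕ := if nd j q < j then nd j q else if nd j q < k then nd j q - 1 else nd j q - 2 with ht
  have es : nd (k - 1) s = p ∧ nd j s = p' ∧ s ≤ n - 1 := by
    unfold nd at h1 ⊢
    unfold nd at hs
    split_ifs at h1 hs ⊢ <;> omega
  have et : nd (k - 1) t = q ∧ nd j t = q' ∧ t ≤ n - 1 := by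
    unfold nd at h2 ⊢
    unfold nd at ht
    split_ifs at h2 ht ⊢ <;> omega
  have Cs := hC j k s hjk hk hji hki es.2.2
  have Ct := hC j k t hjk hk hji hki et.2.2
  rw [es.1, es.2.1] at Cs
  rw [et.1, et.2.1] at Ct
  calc (U j p)⁻¹ * U j q
      = ((U j (nd (k - 1) 0))⁻¹ * U j p)⁻¹ * ((U j (nd (k - 1) 0))⁻¹ * U j q) := by group
    _ = ((U k (nd j 0))⁻¹ * U k p')⁻¹ * ((U k (nd j 0))⁻¹ * U k q') := by rw [Cs, Ct]
    _ = (U k p')⁻¹ * U k q' := by group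

/-- Edge consistency between two faces of a horn. -/
lemma edgeC (hn : 1 ≤ n)
    (hC : ∀ j k t : ℕ, j < k → k ≤ n + 1 → j ≠ i → k ≠ i → t ≤ n - 1 →
      (U k (nd j 0))⁻¹ * U k (nd j t) = (U j (nd (k - 1) 0))⁻¹ * U j (nd (k - 1) t))
    {j k p q p' q' : ℕ} (hj : j ≤ n + 1) (hk : k ≤ n + 1) (hji : j ≠ i) (hki : k ≠ i)
    (hp : p ≤ n) (hq : q ≤ n) (hp' : p' ≤ n) (hq' : q' ≤ n)
    (h1 : nd j p = nd k p') (h2 : nd j q = nd k q') :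
    (U j p)⁻¹ * U j q = (U k p')⁻¹ * U k q' := by
  rcases lt_trichotomy j k with h | h | h
  · exact edge_aux U hn hC h hk hji hki hp hq hp' hq' h1 h2
  · subst h
    have e1 : p = p' := by unfold nd at h1; split_ifs at h1 <;> omega
    have e2 : q = q' := by unfold nd at h2; split_ifs at h2 <;> omega
    rw [e1, e2]
  · exact (edge_aux U hn hC h hj hki hji hp' hq' hp hq h1.symm h2.symm).symm

end Core

end Stmt19
namespace Stmt19
open SSet SimplexCategory

/-- Construction of the vertex function of a horn filler in the nerve. -/
lemma core {n : ℕ} {i : ℕ} (hi : i ≤ n + 1) (U : ℕ → ℕ → G)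
    (hU0 : ∀ j, U j 0 = 1)
    (hC : ∀ j k t : ℕ, j < k → k ≤ n + 1 → j ≠ i → k ≠ i → t ≤ n - 1 →
      (U k (nd j 0))⁻¹ * U k (nd j t) = (U j (nd (k - 1) 0))⁻¹ * U j (nd (k - 1) t)) :
    ∃ V : ℕ → G, V 0 = 1 ∧
      ∀ j, j ≤ n + 1 → j ≠ i → ∀ l, l ≤ n → U j l = (V (nd j 0))⁻¹ * V (nd j l) := by
  match n, hi, hC with
  | 0, hi, hC =>
    refine ⟨fun _ => 1, rfl, ?_⟩
    intro j hj hji l hl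
    have : l = 0 := by omega
    subst this
    rw [hU0]
    exact (inv_mul_cancel 1).symm
  | 1, hi, hC =>
    interval_cases i
    · refine ⟨fun l => if l = 1 then U 2 1 else if l = 2 then U 1 1 else 1, rfl, ?_⟩
      intro j hj hji l hl
      interval_cases j <;> interval_cases l <;>
        first
          | exact absurd rfl hji
          | (rw [hU0]; exact (inv_mul_cancel _).symm)
          | norm_num [nd]
          | (norm_num [nd]; group)
    · refine ⟨fun l => if l = 1 then U 2 1 else if l = 2 then U 2 1 * U 0 1 else 1, rfl, ?_⟩
      intro j hj hji l hl
      interval_cases j <;> interval_cases l <;>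
        first
          | exact absurd rfl hji
          | (rw [hU0]; exact (inv_mul_cancel _).symm)
          | norm_num [nd]
          | (norm_num [nd]; group)
    · refine ⟨fun l => if l = 1 then U 1 1 * (U 0 1)⁻¹ else if l = 2 then U 1 1 else 1, rfl, ?_⟩
      intro j hj hji l hl
      interval_cases j <;> interval_cases l <;>
        first
          | exact absurd rfl hji
          | (rw [hU0]; exact (inv_mul_cancel _).symm)
          | norm_num [nd]
          | (norm_num [nd]; group)
  | (m + 2), hi, hC =>
    set n := m + 2 with hn
    set a : ℕ := if i = n + 1 then n else n + 1 with ha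
    set b : ℕ := if n ≤ i then n - 1 else n with hb
    have haf : a ≤ n + 1 ∧ a ≠ i ∧ 2 ≤ a := by rw [ha]; split_ifs <;> omega
    have hbf : b ≤ n + 1 ∧ b ≠ i ∧ 1 ≤ b ∧ b < a := by rw [hb, ha]; split_ifs <;> omega
    obtain ⟨ha1, ha2, ha3⟩ := haf
    obtain ⟨hb1, hb2, hb3, hb4⟩ := hbf
    refine ⟨fun l => if l = a then U b (a - 1) else U a (if l < a then l else l - 1), ?_, ?_⟩
    · simp only []
      rw [if_neg (by omega), if_pos (by omega)]
      exact hU0 a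
    · intro j hj hji l hl
      simp only []
      by_cases hl0 : l = 0
      · subst hl0
        rw [hU0]
        exact (inv_mul_cancel _).symm
      by_cases hj0 : j = 0
      · subst hj0
        have e0 : nd 0 0 = 1 := rfl
        have e1 : nd 0 l = l + 1 := by unfold nd; rw [if_neg (by omega)]
        rw [e0, e1, if_neg (show (1 : ℕ) ≠ a by omega), if_pos (show 1 < a by omega)]
        by_cases hla : l + 1 = a
        · rw [if_pos hla]
          by_cases hb5 : 2 ≤ b
          · have h5 := edgeC U (by omega) hC (j := 0) (k := b) (p := 0) (q := l) (p' := 1)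
              (q' := a - 1) (by omega) hb1 hji hb2 (by omega) (by omega) (by omega) (by omega)
              (by unfold nd; split_ifs <;> omega) (by unfold nd; split_ifs <;> omega)
            have h6 := edgeC U (by omega) hC (j := b) (k := a) (p := 0) (q := 1) (p' := 0)
              (q' := 1) hb1 ha1 hb2 ha2 (by omega) (by omega) (by omega) (by omega)
              (by unfold nd; split_ifs <;> omega) (by unfold nd; split_ifs <;> omega)
            simp only [hU0, inv_one, one_mul] at h5
            simp only [hU0, inv_one, one_mul] at h6
            rw [h5, h6]
          · -- b = 1 forces n = 2 and i ∈ {2, 3}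
            have hb1' : b = 1 := by omega
            have hni : n = 2 ∧ 2 ≤ i := by rw [hb] at hb1'; split_ifs at hb1' <;> omega
            obtain ⟨hnn, hii⟩ := hni
            rcases (by omega : i = 2 ∨ i = 3) with hi2 | hi3
            · have haa : a = 3 := by rw [ha]; split_ifs <;> omega
              have hll : l = 2 := by omega
              subst hll
              rw [haa, hb1']
              norm_num
              have c1 := hC 0 1 1 (by omega) (by omega) (by omega) (by omega) (by omega)
              have c2 := hC 0 3 1 (by omega) (by omega) (by omega) (by omega) (by omega)
              have c3 := hC 1 3 1 (by omega) (by omega) (by omega) (by omega) (by omega)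
              norm_num [nd] at c1 c2 c3
              simp only [hU0, inv_one, one_mul] at c1 c2 c3
              have d1 : U 0 1 * ((U 1 1)⁻¹ * U 1 2) = U 0 2 := by rw [c1]; group
              rw [← d1, ← c2, c3]
              group
            · have haa : a = 2 := by rw [ha]; split_ifs <;> omega
              have hll : l = 1 := by omega
              subst hll
              rw [haa, hb1']
              norm_num
              have c1 := hC 0 1 1 (by omega) (by omega) (by omega) (by omega) (by omega)
              have c2 := hC 0 2 1 (by omega) (by omega) (by omega) (by omega) (by omega)
              have c3 := hC 1 2 1 (by omega) (by omega) (by omega) (by omega) (by omega)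
              norm_num [nd] at c1 c2 c3
              simp only [hU0, inv_one, one_mul] at c1 c2 c3
              have d1 : U 0 1 * ((U 1 1)⁻¹ * U 1 2) = U 0 2 := by rw [c1]; group
              have d2 : U 0 1 * ((U 1 1)⁻¹ * U 1 2) = (U 2 1)⁻¹ * U 1 2 := by
                rw [d1, ← c2, c3]
              have d3 : (U 0 1 * (U 1 1)⁻¹) * U 1 2 = (U 2 1)⁻¹ * U 1 2 := by
                rw [mul_assoc]; exact d2
              have d4 := mul_right_cancel d3
              rw [← d4]
              group
        · rw [if_neg hla]
          have h5 := edgeC U (by omega) hC (j := 0) (k := a) (p := 0) (q := l) (p' := 1)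
            (q' := if l + 1 < a then l + 1 else l + 1 - 1) (by omega) ha1 hji ha2
            (by omega) (by omega) (by omega) (by split_ifs <;> omega)
            (by unfold nd; split_ifs <;> omega) (by unfold nd; split_ifs <;> omega)
          simp only [hU0, inv_one, one_mul] at h5
          exact h5
      · have e0 : nd j 0 = 0 := by unfold nd; rw [if_pos (by omega)]
        rw [e0, if_neg (show (0 : ℕ) ≠ a by omega), if_pos (show 0 < a by omega), hU0,
          inv_one, one_mul]
        by_cases hja : j = a
        · subst hja
          have e2 : nd a l ≠ a := by unfold nd; split_ifs <;> omega
          rw [if_neg e2]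
          have e3 : (if nd a l < a then nd a l else nd a l - 1) = l := by
            unfold nd; split_ifs <;> omega
          rw [e3]
        · by_cases hma : nd j l = a
          · rw [if_pos hma]
            have h5 := edgeC U (by omega) hC (j := j) (k := b) (p := 0) (q := l) (p' := 0)
              (q' := a - 1) hj hb1 hji hb2 (by omega) (by omega) (by omega) (by omega)
              (by unfold nd; split_ifs <;> omega)
              (by unfold nd at hma ⊢; split_ifs at hma ⊢ <;> omega)
            simp only [hU0, inv_one, one_mul] at h5
            exact h5
          · rw [if_neg hma]
            have h5 := edgeC U (by omega) hC (j := j) (k := a) (p := 0) (q := l) (p' := 0)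
              (q' := if nd j l < a then nd j l else nd j l - 1) hj ha1 hji ha2
              (by omega) (by omega) (by omega)
              (by unfold nd; split_ifs <;> omega)
              (by unfold nd; split_ifs <;> omega)
              (by unfold nd at hma ⊢; split_ifs at hma ⊢ <;> omega)
            simp only [hU0, inv_one, one_mul] at h5
            exact h5

end Stmt19
namespace Stmt19
open SSet SimplexCategory

lemma nerve_filler {n : ℕ} (i : Fin (n + 2)) (u : (Λ[n + 1, i] : SSet.{u}) ⟶ NerveG G) :
    ∃ W : Fin (n + 1) → G, ∀ (j : Fin (n + 2)) (hj : j ≠ i),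
      nerveMapFn (δ j).toOrderHom W = u.app (op (SimplexCategory.mk n)) (horn.face i j hj) := by
  rcases n with _ | m
  · refine ⟨fun _ => 1, ?_⟩
    intro j hj
    funext x
    exact x.elim0
  · -- n = m + 1
    set F : ∀ (j : Fin (m + 3)), j ≠ i → (Fin (m + 1) → G) :=
      fun j hj => u.app (op (SimplexCategory.mk (m + 1))) (horn.face i j hj) with hF
    set U : ℕ → ℕ → G := fun j l =>
      if h : j < m + 3 then
        (if h2 : (⟨j, h⟩ : Fin (m + 3)) ≠ i then vtxN (F ⟨j, h⟩ h2) l else 1)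
      else 1 with hU
    have hUeq : ∀ (j : ℕ) (h : j < m + 3) (hj : (⟨j, h⟩ : Fin (m + 3)) ≠ i) (l : ℕ),
        U j l = vtxN (F ⟨j, h⟩ hj) l := by
      intro j h hj l
      simp only [hU]
      rw [dif_pos h, dif_pos hj]
    have hU0 : ∀ j, U j 0 = 1 := by
      intro j
      simp only [hU]
      split_ifs <;> rfl
    have hCC : ∀ j k t : ℕ, j < k → k ≤ m + 1 + 1 → j ≠ (i : ℕ) → k ≠ (i : ℕ) →
        t ≤ m + 1 - 1 →
        (U k (nd j 0))⁻¹ * U k (nd j t) = (U j (nd (k - 1) 0))⁻¹ * U j (nd (k - 1) t) := by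
      intro j k t hjk hk hjne hkne ht
      have hj3 : j < m + 3 := by omega
      have hk3 : k < m + 3 := by omega
      have hjF : (⟨j, hj3⟩ : Fin (m + 3)) ≠ i := fun hh => hjne (congrArg Fin.val hh)
      have hkF : (⟨k, hk3⟩ : Fin (m + 3)) ≠ i := fun hh => hkne (congrArg Fin.val hh)
      have hcomp := horn_compat u hjk hk hjF hkF
      have hv : vtxN (nerveMapFn (δ (⟨j, by omega⟩ : Fin (m + 2))).toOrderHom
            (F ⟨k, hk3⟩ hkF)) t =
          vtxN (nerveMapFn (δ (⟨k - 1, by omega⟩ : Fin (m + 2))).toOrderHom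
            (F ⟨j, hj3⟩ hjF)) t :=
        congrArg (fun g => vtxN g t) hcomp
      rw [vtxN_δ _ _ (show t < m + 1 by omega), vtxN_δ _ _ (show t < m + 1 by omega)] at hv
      rw [hUeq k hk3 hkF, hUeq k hk3 hkF, hUeq j hj3 hjF, hUeq j hj3 hjF]
      exact hv
    obtain ⟨V, hV0, hV⟩ := core (n := m + 1) (i := (i : ℕ)) (by have := i.isLt; omega) U hU0 hCC
    refine ⟨fun k => (V (m + 1 - (k : ℕ)))⁻¹ * V (m + 2 - (k : ℕ)), ?_⟩
    set W : Fin (m + 2) → G := fun k => (V (m + 1 - (k : ℕ)))⁻¹ * V (m + 2 - (k : ℕ)) with hW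
    have vtxW : ∀ l, l ≤ m + 2 → vtxN W l = V l := by
      intro l
      induction l with
      | zero => intro _; rw [hV0]; rfl
      | succ l ih =>
          intro hl
          rw [vtxN_succ_of_lt W (by omega), ih (by omega)]
          show V l * ((V (m + 1 - (m + 2 - 1 - l)))⁻¹ * V (m + 2 - (m + 2 - 1 - l))) = V (l + 1)
          rw [show m + 1 - (m + 2 - 1 - l) = l by omega,
            show m + 2 - (m + 2 - 1 - l) = l + 1 by omega, mul_inv_cancel_left]
    intro j hj
    show nerveMapFn (δ j).toOrderHom W = F j hj
    apply eq_of_vtxN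
    intro l hl
    simp only [SimplexCategory.len_mk] at hl
    have hjlt := j.isLt
    rw [vtxN_δ j W (show l < m + 2 by omega), vtxW _ (by unfold nd; split_ifs <;> omega),
      vtxW _ (by unfold nd; split_ifs <;> omega),
      ← hV (j : ℕ) (by omega) (fun hh => hj (Fin.ext hh)) l (by omega)]
    exact hUeq (j : ℕ) j.isLt (fun hh => hj (by rw [← hh])) l
end Stmt19
namespace Stmt19
open SSet SimplexCategory

lemma val_mk {N a : ℕ} (h : a < N) : ((⟨a, h⟩ : Fin N) : ℕ) = a := rfl

lemma isKanFib_toPt_nerve : IsKanFibSSet (toPt (NerveG G)) := by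
  intro n i u v _
  obtain ⟨W, hW⟩ := nerve_filler i u
  exact ⟨ptMap W, horn_filler_crit u W (fun j hj => hW j hj), to_pt_unique _ _⟩

lemma isKanFib_projG : IsKanFibSSet (projG G) := by
  intro n i u v hcomm
  have hsnd : ∀ (j : Fin (n + 2)) (hj : j ≠ i),
      (u.app (op (SimplexCategory.mk n)) (horn.face i j hj)).2 =
        nerveMapFn (δ j).toOrderHom (ev v) := by
    intro j hj
    have h1 := ConcreteCategory.congr_hom (congrArg (fun f => NatTrans.app f (op (SimplexCategory.mk n))) hcomm)
      (horn.face i j hj)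
    exact h1.trans (app_eq v _)
  obtain ⟨x, hx⟩ : ∃ x : G, ∀ (j : Fin (n + 2)) (hj : j ≠ i),
      (vtxN (ev v) (nd (j : ℕ) 0))⁻¹ * x =
        (u.app (op (SimplexCategory.mk n)) (horn.face i j hj)).1 := by
    rcases n with _ | m
    · -- n = 0
      fin_cases i
      · refine ⟨(u.app _ (horn.face 0 1 (by decide))).1, ?_⟩
        intro j hj
        fin_cases j
        · exact absurd rfl hj
        · show (vtxN (ev v) (nd 1 0))⁻¹ * _ = _
          erw [show nd 1 0 = 0 from rfl, vtxN_zero, inv_one, one_mul]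
          rfl
      · refine ⟨vtxN (ev v) 1 * (u.app _ (horn.face 1 0 (by decide))).1, ?_⟩
        intro j hj
        fin_cases j
        · show (vtxN (ev v) (nd 0 0))⁻¹ * (vtxN (ev v) 1 * _) = _
          rw [show nd 0 0 = 1 from rfl, inv_mul_cancel_left]
          rfl
        · exact absurd rfl hj
    · -- n = m + 1
      have p0 : (0 : ℕ) < m + 3 := Nat.succ_pos _
      have p1 : (1 : ℕ) < m + 3 := Nat.succ_lt_succ (Nat.succ_pos _)
      have p2 : (2 : ℕ) < m + 3 := Nat.succ_lt_succ (Nat.succ_lt_succ (Nat.succ_pos _))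
      have hface_fst : ∀ (jn kn : ℕ) (hjn : jn < m + 3) (hkn : kn < m + 3)
          (hj : (⟨jn, hjn⟩ : Fin (m + 3)) ≠ i) (hk : (⟨kn, hkn⟩ : Fin (m + 3)) ≠ i),
          jn < kn →
          (vtxN (u.app _ (horn.face i ⟨kn, hkn⟩ hk)).2 (nd jn 0))⁻¹ *
              (u.app _ (horn.face i ⟨kn, hkn⟩ hk)).1 =
          (vtxN (u.app _ (horn.face i ⟨jn, hjn⟩ hj)).2 (nd (kn - 1) 0))⁻¹ *
              (u.app _ (horn.face i ⟨jn, hjn⟩ hj)).1 := by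
        intro jn kn hjn hkn hj hk hjk
        have hcomp := horn_compat u hjk (by omega) hj hk
        have h1 := congrArg Prod.fst hcomp
        have e1 : ((ActionG G).map (δ (⟨jn, by omega⟩ : Fin (m + 2))).op
              (u.app _ (horn.face i ⟨kn, by omega⟩ hk))).1 =
            (vtxN (u.app _ (horn.face i ⟨kn, hkn⟩ hk)).2 (nd jn 0))⁻¹ *
              (u.app _ (horn.face i ⟨kn, hkn⟩ hk)).1 := by
          show (vtxN _ (((δ (⟨jn, by omega⟩ : Fin (m + 2))).toOrderHom 0 : Fin (m + 2)) : ℕ))⁻¹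
              * _ = _
          rw [coe_δ]
          rfl
        have e2 : ((ActionG G).map (δ (⟨kn - 1, by omega⟩ : Fin (m + 2))).op
              (u.app _ (horn.face i ⟨jn, by omega⟩ hj))).1 =
            (vtxN (u.app _ (horn.face i ⟨jn, hjn⟩ hj)).2 (nd (kn - 1) 0))⁻¹ *
              (u.app _ (horn.face i ⟨jn, hjn⟩ hj)).1 := by
          show (vtxN _ (((δ (⟨kn - 1, by omega⟩ : Fin (m + 2))).toOrderHom 0 : Fin (m + 2)) : ℕ))⁻¹
              * _ = _
          rw [coe_δ]
          rfl
        exact e1.symm.trans (h1.trans e2)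
      have keypos : ∀ (jn kn : ℕ) (hjn : jn < m + 3) (hkn : kn < m + 3)
          (hj : (⟨jn, hjn⟩ : Fin (m + 3)) ≠ i) (hk : (⟨kn, hkn⟩ : Fin (m + 3)) ≠ i),
          1 ≤ jn → jn < kn →
          (u.app _ (horn.face i ⟨kn, hkn⟩ hk)).1 = (u.app _ (horn.face i ⟨jn, hjn⟩ hj)).1 := by
        intro jn kn hjn hkn hj hk h1 h2
        have l1 := hface_fst jn kn hjn hkn hj hk h2
        rw [show nd jn 0 = 0 by unfold nd; split_ifs <;> omega,
          show nd (kn - 1) 0 = 0 by unfold nd; split_ifs <;> omega,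
          vtxN_zero, vtxN_zero, inv_one, one_mul, one_mul] at l1
        exact l1
      by_cases hi1 : (i : ℕ) = 1
      · -- use face 2
        have h2ne : (⟨2, p2⟩ : Fin (m + 3)) ≠ i := by
          intro hh; have := congrArg Fin.val hh; rw [val_mk] at this; omega
        refine ⟨(u.app _ (horn.face i ⟨2, p2⟩ h2ne)).1, ?_⟩
        intro j hj
        by_cases hj0 : (j : ℕ) = 0
        · have hjne : (⟨0, p0⟩ : Fin (m + 3)) ≠ i := by
            intro hh; have := congrArg Fin.val hh; rw [val_mk] at this; omega
          have l0 := hface_fst 0 2 p0 p2 hjne h2ne (by omega)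
          rw [show nd 0 0 = 1 from rfl, show nd (2 - 1) 0 = 0 from rfl,
            vtxN_zero, inv_one, one_mul] at l0
          erw [hsnd ⟨2, p2⟩ h2ne, vtxN_δ _ _ (show 1 < m + 2 by omega), val_mk,
            show nd 2 0 = 0 from rfl, show nd 2 1 = 1 from rfl,
            vtxN_zero, inv_one, one_mul] at l0
          have hjeq : j = ⟨0, p0⟩ := Fin.ext (by rw [val_mk]; exact hj0)
          subst hjeq
          rw [val_mk, show nd 0 0 = 1 from rfl]
          exact l0
        · erw [show nd (j : ℕ) 0 = 0 by unfold nd; split_ifs <;> omega,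
            vtxN_zero, inv_one, one_mul]
          rcases lt_trichotomy (j : ℕ) 2 with h | h | h
          · have hj1 : (j : ℕ) = 1 := by omega
            exfalso
            exact hj (Fin.ext (by rw [hj1, hi1]))
          · have hjeq : j = ⟨2, p2⟩ := Fin.ext (by rw [val_mk]; exact h)
            subst hjeq
            rfl
          · exact (keypos 2 (j : ℕ) p2 j.isLt h2ne hj (by omega) h).symm
      · -- use face 1
        have h1ne : (⟨1, p1⟩ : Fin (m + 3)) ≠ i := by
          intro hh; have := congrArg Fin.val hh; rw [val_mk] at this; omega
        refine ⟨(u.app _ (horn.face i ⟨1, p1⟩ h1ne)).1, ?_⟩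
        intro j hj
        by_cases hj0 : (j : ℕ) = 0
        · have hjne : (⟨0, p0⟩ : Fin (m + 3)) ≠ i := by
            intro hh
            have := congrArg Fin.val hh; rw [val_mk] at this
            exact hj (Fin.ext (by rw [hj0, ← this]))
          have l0 := hface_fst 0 1 p0 p1 hjne h1ne (by omega)
          rw [show nd 0 0 = 1 from rfl] at l0
          erw [hsnd ⟨1, p1⟩ h1ne, vtxN_δ _ _ (show 1 < m + 2 by omega), val_mk,
            show nd 1 0 = 0 from rfl, show nd 1 1 = 2 from rfl,
            vtxN_zero, inv_one, one_mul] at l0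
          erw [hsnd ⟨0, p0⟩ hjne, vtxN_δ _ _ (show 1 < m + 2 by omega), val_mk,
            show nd 0 0 = 1 from rfl, show nd 0 1 = 2 from rfl] at l0
          have hjeq : j = ⟨0, p0⟩ := Fin.ext (by rw [val_mk]; exact hj0)
          subst hjeq
          rw [val_mk, show nd 0 0 = 1 from rfl]
          calc (vtxN (ev v) 1)⁻¹ * (u.app _ (horn.face i ⟨1, p1⟩ h1ne)).1
              = ((vtxN (ev v) 1)⁻¹ * vtxN (ev v) 2) *
                ((vtxN (ev v) 2)⁻¹ * (u.app _ (horn.face i ⟨1, p1⟩ h1ne)).1) := by group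
            _ = ((vtxN (ev v) 1)⁻¹ * vtxN (ev v) 2) *
                (((vtxN (ev v) 1)⁻¹ * vtxN (ev v) 2)⁻¹ *
                  (u.app _ (horn.face i ⟨0, p0⟩ hjne)).1) := by rw [l0]
            _ = (u.app _ (horn.face i ⟨0, p0⟩ hjne)).1 := by group
        · erw [show nd (j : ℕ) 0 = 0 by unfold nd; split_ifs <;> omega,
            vtxN_zero, inv_one, one_mul]
          rcases lt_trichotomy (j : ℕ) 1 with h | h | h
          · omega
          · have hjeq : j = ⟨1, p1⟩ := Fin.ext (by rw [val_mk]; exact h)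
            subst hjeq
            rfl
          · exact (keypos 1 (j : ℕ) p1 j.isLt h1ne hj (by omega) h).symm
  refine ⟨ptMap (X := ActionG G) (n := n + 1) (x, ev v), ?_, ?_⟩
  · apply horn_filler_crit
    intro j hj
    refine Prod.ext ?_ ?_
    · show (vtxN (ev v) (((δ j).toOrderHom 0 : Fin (n + 2)) : ℕ))⁻¹ * x = _
      rw [coe_δ]
      exact hx j hj
    · exact (hsnd j hj).symm
  · apply hom_ext_ev
    rw [ev_comp]
    show (ev (ptMap (X := ActionG G) (n := n + 1) (x, ev v))).2 = ev v
    erw [ev_ptMap]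

lemma isKanFib_comp {X Y Z : SSet.{u}} {p : X ⟶ Y} {q : Y ⟶ Z}
    (hp : IsKanFibSSet p) (hq : IsKanFibSSet q) : IsKanFibSSet (p ≫ q) := by
  intro n i u v hcomm
  obtain ⟨v', hv1, hv2⟩ := hq n i (u ≫ p) v (by rw [Category.assoc]; exact hcomm)
  obtain ⟨w, hw1, hw2⟩ := hp n i u v' (hv1.symm)
  exact ⟨w, hw1, by rw [← Category.assoc, hw2, hv2]⟩

end Stmt19
namespace Stmt19
open SSet SimplexCategory

lemma ev_face_lift {X : SSet.{u}} {n1 n2 m m' : ℕ} (H : (Δ[n1] : SSet.{u}) ⨯ Δ[n2] ⟶ X)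
    (a : Δ[m] ⟶ Δ[n1]) (b : Δ[m] ⟶ Δ[n2]) (φ : SimplexCategory.mk m' ⟶ SimplexCategory.mk m) :
    X.map φ.op (ev (prod.lift a b ≫ H)) =
      ev (prod.lift (SSet.stdSimplex.map φ ≫ a) (SSet.stdSimplex.map φ ≫ b) ≫ H) := by
  rw [← ev_std, ← Category.assoc, prod.comp_lift]

/-- pullback of any nerve simplex along a constant map is the constant-1 tuple. -/
lemma nerve_const_pull {m n : ℕ} (k : Fin (n + 1)) (g : Fin n → G) :
    nerveMapFn (SimplexCategory.const (SimplexCategory.mk m) (SimplexCategory.mk n)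
      k).toOrderHom g = fun _ : Fin m => (1 : G) := by
  funext t
  exact inv_mul_cancel _

lemma nonsurj_const (k : Fin 2) :
    ¬Function.Surjective (SimplexCategory.const (SimplexCategory.mk 1)
      (SimplexCategory.mk 1) k).toOrderHom := by
  intro hs
  rcases hs (if k = 0 then 1 else 0) with ⟨t, ht⟩
  have hk : (SimplexCategory.const (SimplexCategory.mk 1) (SimplexCategory.mk 1)
      k).toOrderHom t = k := rfl
  rw [hk] at ht
  fin_cases k <;> simp at ht

/-- constant edge of a rel-boundary homotopy equals the corresponding constant on `x`. -/
lemma htpy_const_edge {X : SSet.{u}} {x : (Δ[1] : SSet.{u}) ⟶ X}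
    {H : (Δ[1] : SSet.{u}) ⨯ Δ[1] ⟶ X}
    (hb : prod.map (∂Δ[1].ι) (𝟙 (Δ[1] : SSet.{u})) ≫ H =
      prod.fst ≫ ∂Δ[1].ι ≫ x) (k : Fin 2) :
    prod.lift (SSet.stdSimplex.map (SimplexCategory.const (SimplexCategory.mk 1)
        (SimplexCategory.mk 1) k)) (𝟙 (Δ[1] : SSet.{u})) ≫ H =
      SSet.stdSimplex.map (SimplexCategory.const (SimplexCategory.mk 1)
        (SimplexCategory.mk 1) k) ≫ x := by
  have hfac := toBdryMap_comp (SimplexCategory.const (SimplexCategory.mk 1)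
    (SimplexCategory.mk 1) k) (nonsurj_const k)
  calc prod.lift (SSet.stdSimplex.map (SimplexCategory.const (SimplexCategory.mk 1)
        (SimplexCategory.mk 1) k)) (𝟙 (Δ[1] : SSet.{u})) ≫ H
      = (prod.lift (toBdryMap _ (nonsurj_const k)) (𝟙 (Δ[1] : SSet.{u})) ≫
          prod.map (∂Δ[1].ι) (𝟙 (Δ[1] : SSet.{u}))) ≫ H := by
        rw [prod.lift_map, Category.comp_id, hfac]
    _ = prod.lift (toBdryMap _ (nonsurj_const k)) (𝟙 (Δ[1] : SSet.{u})) ≫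
          (prod.fst ≫ ∂Δ[1].ι ≫ x) := by rw [Category.assoc, hb]
    _ = (prod.lift (toBdryMap _ (nonsurj_const k)) (𝟙 (Δ[1] : SSet.{u})) ≫ prod.fst) ≫
          ∂Δ[1].ι ≫ x := by rw [Category.assoc]
    _ = toBdryMap _ (nonsurj_const k) ≫ ∂Δ[1].ι ≫ x := by rw [prod.lift_fst]
    _ = SSet.stdSimplex.map (SimplexCategory.const (SimplexCategory.mk 1)
        (SimplexCategory.mk 1) k) ≫ x := by rw [← Category.assoc, hfac]

lemma min_projG : IsMinimalKanFib (projG G) := by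
  refine ⟨isKanFib_projG, ?_⟩
  intro n x y hbdry hproj hhtpy
  rcases n with _ | m
  · -- n = 0 : use the homotopy
    obtain ⟨H, h0, h1, hb, hover⟩ := hhtpy
    apply hom_ext_ev
    set e : (Δ[1] : SSet.{u}) ⟶ (Δ[0] : SSet.{u}) ⨯ Δ[1] :=
      prod.lift (toPt Δ[1]) (𝟙 Δ[1]) with he
    set K := ev (e ≫ H) with hK
    have comp1 : SSet.stdSimplex.map (δ (1 : Fin 2)) ≫ e =
        prod.lift (𝟙 (Δ[0] : SSet.{u})) (vert 0 0) := by
      rw [he, prod.comp_lift]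
      have e1 : SSet.stdSimplex.map (δ (1 : Fin 2)) ≫ toPt Δ[1] = 𝟙 (Δ[0] : SSet.{u}) :=
        to_pt_unique _ _
      have e2 : SSet.stdSimplex.map (δ (1 : Fin 2)) ≫ 𝟙 (Δ[1] : SSet.{u}) = vert 0 0 := by
        rw [Category.comp_id]
        show SSet.stdSimplex.map (δ (1 : Fin 2)) = SSet.stdSimplex.map _
        congr 1
        apply SimplexCategory.Hom.ext; apply OrderHom.ext; funext t; apply Fin.ext
        rw [coe_δ]
        have ht2 : (t : ℕ) < 1 := by simpa [SimplexCategory.len_mk] using t.isLt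
        show nd 1 (t : ℕ) = 0
        unfold nd; split_ifs <;> omega
      rw [e1, e2]
    have comp0 : SSet.stdSimplex.map (δ (0 : Fin 2)) ≫ e =
        prod.lift (𝟙 (Δ[0] : SSet.{u})) (vert 0 1) := by
      rw [he, prod.comp_lift]
      have e1 : SSet.stdSimplex.map (δ (0 : Fin 2)) ≫ toPt Δ[1] = 𝟙 (Δ[0] : SSet.{u}) :=
        to_pt_unique _ _
      have e2 : SSet.stdSimplex.map (δ (0 : Fin 2)) ≫ 𝟙 (Δ[1] : SSet.{u}) = vert 0 1 := by
        rw [Category.comp_id]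
        show SSet.stdSimplex.map (δ (0 : Fin 2)) = SSet.stdSimplex.map _
        congr 1
        apply SimplexCategory.Hom.ext; apply OrderHom.ext; funext t; apply Fin.ext
        rw [coe_δ]
        have ht2 : (t : ℕ) < 1 := by simpa [SimplexCategory.len_mk] using t.isLt
        show nd 0 (t : ℕ) = 1
        unfold nd; split_ifs <;> omega
      rw [e1, e2]
    have hd1 : (ActionG G).map (δ (1 : Fin 2)).op K = ev x := by
      rw [hK, ← ev_std, ← Category.assoc, comp1, h0]
    have hd0 : (ActionG G).map (δ (0 : Fin 2)).op K = ev y := by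
      rw [hK, ← ev_std, ← Category.assoc, comp0, h1]
    have hover2 : K.2 = fun _ : Fin 1 => (1 : G) := by
      have e2 : (e ≫ H) ≫ projG G = toPt Δ[1] ≫ (x ≫ projG G) := by
        calc (e ≫ H) ≫ projG G = e ≫ (H ≫ projG G) := Category.assoc _ _ _
          _ = e ≫ (prod.fst ≫ x ≫ projG G) := by rw [hover]
          _ = (e ≫ prod.fst) ≫ (x ≫ projG G) := by rw [Category.assoc]
          _ = toPt Δ[1] ≫ (x ≫ projG G) := by rw [he, prod.lift_fst]
      have h3 : K.2 = ev (toPt Δ[1] ≫ (x ≫ projG G)) := by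
        show ev ((e ≫ H) ≫ projG G) = _
        rw [e2]
      rw [show toPt Δ[1] = SSet.stdSimplex.map (SimplexCategory.const (SimplexCategory.mk 1)
        (SimplexCategory.mk 0) 0) from to_pt_unique _ _, ev_std] at h3
      rw [h3]
      exact nerve_const_pull _ _
    have f1 : ((ActionG G).map (δ (1 : Fin 2)).op K).1 = K.1 := by
      show (vtxN K.2 (((δ (1 : Fin 2)).toOrderHom 0 : Fin 2) : ℕ))⁻¹ * K.1 = K.1
      rw [coe_δ]
      show (vtxN K.2 0)⁻¹ * K.1 = K.1
      rw [vtxN_zero, inv_one, one_mul]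
    have f0 : ((ActionG G).map (δ (0 : Fin 2)).op K).1 = K.1 := by
      show (vtxN K.2 (((δ (0 : Fin 2)).toOrderHom 0 : Fin 2) : ℕ))⁻¹ * K.1 = K.1
      rw [coe_δ]
      show (vtxN K.2 1)⁻¹ * K.1 = K.1
      rw [hover2]
      show ((1 : G) * 1)⁻¹ * K.1 = K.1
      rw [one_mul, inv_one, one_mul]
    refine Prod.ext ?_ ?_
    · calc (ev x).1 = ((ActionG G).map (δ (1 : Fin 2)).op K).1 := (congrArg Prod.fst hd1).symm
        _ = K.1 := f1
        _ = ((ActionG G).map (δ (0 : Fin 2)).op K).1 := f0.symm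
        _ = (ev y).1 := congrArg Prod.fst hd0
    · funext k
      exact k.elim0
  · -- n = m + 1 : boundary + projection determine the simplex
    apply hom_ext_ev
    refine Prod.ext ?_ ?_
    · have hb1 := bdry_face_eq hbdry ⟨1, by omega⟩
      have f1 : ∀ z : (Δ[m + 1] : SSet.{u}) ⟶ ActionG G,
          ((ActionG G).map (δ (⟨1, by omega⟩ : Fin (m + 2))).op (ev z)).1 = (ev z).1 := by
        intro z
        show (vtxN (ev z).2 (((δ (⟨1, by omega⟩ : Fin (m + 2))).toOrderHom 0 :
            Fin (m + 2)) : ℕ))⁻¹ * (ev z).1 = (ev z).1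
        rw [coe_δ]
        show (vtxN (ev z).2 0)⁻¹ * (ev z).1 = (ev z).1
        rw [vtxN_zero, inv_one, one_mul]
      calc (ev x).1 = ((ActionG G).map (δ (⟨1, by omega⟩ : Fin (m + 2))).op (ev x)).1 :=
            (f1 x).symm
        _ = ((ActionG G).map (δ (⟨1, by omega⟩ : Fin (m + 2))).op (ev y)).1 :=
            congrArg Prod.fst hb1
        _ = (ev y).1 := f1 y
    · exact congrArg ev hproj

end Stmt19
namespace Stmt19
open SSet SimplexCategory

def s0 : SimplexCategory.mk 2 ⟶ SimplexCategory.mk 1 := SimplexCategory.mkHom ⟨![0, 0, 1], by decide⟩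
def s1 : SimplexCategory.mk 2 ⟶ SimplexCategory.mk 1 := SimplexCategory.mkHom ⟨![0, 1, 1], by decide⟩

lemma cA : δ (2 : Fin 3) ≫ s0 = SimplexCategory.const (SimplexCategory.mk 1) (SimplexCategory.mk 1) 0 := by
  apply SimplexCategory.Hom.ext; apply OrderHom.ext; funext t; fin_cases t <;> rfl
lemma cB : δ (2 : Fin 3) ≫ s1 = 𝟙 (SimplexCategory.mk 1) := by
  apply SimplexCategory.Hom.ext; apply OrderHom.ext; funext t; fin_cases t <;> rfl
lemma cC : δ (0 : Fin 3) ≫ s0 = 𝟙 (SimplexCategory.mk 1) := by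
  apply SimplexCategory.Hom.ext; apply OrderHom.ext; funext t; fin_cases t <;> rfl
lemma cD : δ (0 : Fin 3) ≫ s1 = SimplexCategory.const (SimplexCategory.mk 1) (SimplexCategory.mk 1) 1 := by
  apply SimplexCategory.Hom.ext; apply OrderHom.ext; funext t; fin_cases t <;> rfl
lemma cE : δ (1 : Fin 3) ≫ s0 = 𝟙 (SimplexCategory.mk 1) := by
  apply SimplexCategory.Hom.ext; apply OrderHom.ext; funext t; fin_cases t <;> rfl
lemma cF : δ (1 : Fin 3) ≫ s1 = 𝟙 (SimplexCategory.mk 1) := by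
  apply SimplexCategory.Hom.ext; apply OrderHom.ext; funext t; fin_cases t <;> rfl

lemma face2_0 (g : Fin 2 → G) :
    nerveMapFn (m := 1) (n := 2) (δ (0 : Fin 3)).toOrderHom g = fun _ : Fin 1 => g 0 := by
  funext k
  have hk : k = 0 := Subsingleton.elim _ _
  subst hk
  show ((1 : G) * g 1)⁻¹ * (1 * g 1 * g 0) = g 0
  group

lemma face2_1 (g : Fin 2 → G) :
    nerveMapFn (m := 1) (n := 2) (δ (1 : Fin 3)).toOrderHom g = fun _ : Fin 1 => g 1 * g 0 := by
  funext k
  have hk : k = 0 := Subsingleton.elim _ _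
  subst hk
  show ((1 : G))⁻¹ * (1 * g 1 * g 0) = g 1 * g 0
  group

lemma face2_2 (g : Fin 2 → G) :
    nerveMapFn (m := 1) (n := 2) (δ (2 : Fin 3)).toOrderHom g = fun _ : Fin 1 => g 1 := by
  funext k
  have hk : k = 0 := Subsingleton.elim _ _
  subst hk
  show ((1 : G))⁻¹ * (1 * g 1) = g 1
  group

def ev1 (f : (Δ[1] : SSet.{u}) ⟶ NerveG G) : Fin 1 → G := ev f

lemma min_toPt_nerve : IsMinimalKanFib (toPt (NerveG G)) := by
  refine ⟨isKanFib_toPt_nerve, ?_⟩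
  intro n x y hbdry hproj hhtpy
  rcases n with _ | _ | m
  · -- n = 0
    apply hom_ext_ev
    funext k
    exact k.elim0
  · -- n = 1
    obtain ⟨H, h0, h1, hb, _⟩ := hhtpy
    apply hom_ext_ev
    show ev1 x = ev1 y
    set T : Fin 2 → G := ev (prod.lift (SSet.stdSimplex.{u}.map s0) (SSet.stdSimplex.{u}.map s1) ≫ H)
      with hT
    set T' : Fin 2 → G := ev (prod.lift (SSet.stdSimplex.{u}.map s1) (SSet.stdSimplex.{u}.map s0) ≫ H)
      with hT'
    have d2T : (NerveG G).map (δ (2 : Fin 3)).op T = fun _ : Fin 1 => (1 : G) := by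
      erw [hT, ev_face_lift, ← Functor.map_comp, ← Functor.map_comp, cA, cB,
        CategoryTheory.Functor.map_id, htpy_const_edge hb 0, ev_std]
      exact nerve_const_pull 0 (ev x)
    have d0T : (NerveG G).map (δ (0 : Fin 3)).op T = ev y := by
      erw [hT, ev_face_lift, ← Functor.map_comp, ← Functor.map_comp, cC, cD,
        CategoryTheory.Functor.map_id,
        show SSet.stdSimplex.map (SimplexCategory.const (SimplexCategory.mk 1)
          (SimplexCategory.mk 1) 1) = vert 1 1 from rfl, h1]
    have d1T : (NerveG G).map (δ (1 : Fin 3)).op T =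
        ev (prod.lift (𝟙 (Δ[1] : SSet.{u})) (𝟙 (Δ[1] : SSet.{u})) ≫ H) := by
      erw [hT, ev_face_lift, ← Functor.map_comp, ← Functor.map_comp, cE, cF,
        CategoryTheory.Functor.map_id]
    have d2T' : (NerveG G).map (δ (2 : Fin 3)).op T' = ev x := by
      erw [hT', ev_face_lift, ← Functor.map_comp, ← Functor.map_comp, cB, cA,
        CategoryTheory.Functor.map_id,
        show SSet.stdSimplex.map (SimplexCategory.const (SimplexCategory.mk 1)
          (SimplexCategory.mk 1) 0) = vert 1 0 from rfl, h0]
    have d0T' : (NerveG G).map (δ (0 : Fin 3)).op T' = fun _ : Fin 1 => (1 : G) := by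
      erw [hT', ev_face_lift, ← Functor.map_comp, ← Functor.map_comp, cD, cC,
        CategoryTheory.Functor.map_id, htpy_const_edge hb 1, ev_std]
      exact nerve_const_pull 1 (ev x)
    have d1T' : (NerveG G).map (δ (1 : Fin 3)).op T' =
        ev (prod.lift (𝟙 (Δ[1] : SSet.{u})) (𝟙 (Δ[1] : SSet.{u})) ≫ H) := by
      erw [hT', ev_face_lift, ← Functor.map_comp, ← Functor.map_comp, cF, cE,
        CategoryTheory.Functor.map_id]
    have e2T : T 1 = 1 := congrFun ((face2_2 T).symm.trans d2T) 0
    have e0T : T 0 = ev1 y 0 := congrFun ((face2_0 T).symm.trans d0T) 0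
    have e2T' : T' 1 = ev1 x 0 := congrFun ((face2_2 T').symm.trans d2T') 0
    have e0T' : T' 0 = 1 := congrFun ((face2_0 T').symm.trans d0T') 0
    have hd : T 1 * T 0 = T' 1 * T' 0 :=
      congrFun (((face2_1 T).symm.trans d1T).trans (d1T'.symm.trans (face2_1 T'))) 0
    funext k
    have hk : k = 0 := Subsingleton.elim _ _
    subst hk
    calc ev1 x 0 = T' 1 := e2T'.symm
      _ = T' 1 * T' 0 := by rw [e0T', mul_one]
      _ = T 1 * T 0 := hd.symm
      _ = ev1 y 0 := by rw [e2T, one_mul, e0T]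
  · -- n = m + 2
    apply hom_ext_ev
    apply eq_of_vtxN
    have hlow : ∀ l, l < m + 2 → vtxN (ev x) l = vtxN (ev y) l := by
      intro l hl
      have h := congrArg (fun g => vtxN g l) (bdry_face_eq hbdry ⟨m + 2, by omega⟩)
      have hx := vtxN_δ (⟨m + 2, by omega⟩ : Fin (m + 3)) (ev x) hl
      have hy := vtxN_δ (⟨m + 2, by omega⟩ : Fin (m + 3)) (ev y) hl
      have h' := hx.symm.trans (h.trans hy)
      simp only [val_mk] at h'
      rw [show nd (m + 2) 0 = 0 by unfold nd; split_ifs <;> omega,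
        show nd (m + 2) l = l by unfold nd; split_ifs <;> omega] at h'
      erw [vtxN_zero, inv_one, one_mul, one_mul] at h'
      exact h'
    intro l hl
    simp only [SimplexCategory.len_mk] at hl
    by_cases hl2 : l < m + 2
    · exact hlow l hl2
    · have hl3 : l = m + 2 := by omega
      subst hl3
      have h := congrArg (fun g => vtxN g (m + 1)) (bdry_face_eq hbdry ⟨0, by omega⟩)
      have hx := vtxN_δ (⟨0, by omega⟩ : Fin (m + 3)) (ev x) (show m + 1 < m + 2 by omega)
      have hy := vtxN_δ (⟨0, by omega⟩ : Fin (m + 3)) (ev y) (show m + 1 < m + 2 by omega)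
      have h' := hx.symm.trans (h.trans hy)
      simp only [val_mk] at h'
      rw [show nd 0 0 = 1 from rfl,
        show nd 0 (m + 1) = m + 2 by unfold nd; split_ifs <;> omega] at h'
      rw [hlow 1 (by omega)] at h'
      exact mul_left_cancel h'

end Stmt19
namespace Stmt19
open SSet SimplexCategory

lemma comp_not_min (G : Type u) [Group G] [Nontrivial G] :
    ¬ IsMinimalKanFib (projG G ≫ toPt (NerveG G)) := by
  obtain ⟨g0, hg0⟩ := exists_ne (1 : G)
  set x0 : (Δ[0] : SSet.{u}) ⟶ ActionG G :=
    ptMap (X := ActionG G) (n := 0) ((1 : G), fun _ => 1) with hx0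
  set y0 : (Δ[0] : SSet.{u}) ⟶ ActionG G :=
    ptMap (X := ActionG G) (n := 0) ((g0 : G), fun _ => 1) with hy0
  set E : (Δ[1] : SSet.{u}) ⟶ ActionG G :=
    ptMap (X := ActionG G) (n := 1) ((1 : G), fun _ => g0⁻¹) with hE
  set H : (Δ[0] : SSet.{u}) ⨯ Δ[1] ⟶ ActionG G := prod.snd ≫ E with hH
  have hbdry : ∀ z w : (Δ[0] : SSet.{u}) ⟶ ActionG G,
      ∂Δ[0].ι ≫ z = ∂Δ[0].ι ≫ w := by
    intro z w
    apply SSet.hom_ext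
    intro j
    refine ConcreteCategory.hom_ext _ _ fun σ => ?_
    haveI : Subsingleton (Fin (0 + 1)) := (inferInstance : Subsingleton (Fin 1))
    exact absurd (fun b => ⟨0, Subsingleton.elim _ _⟩) σ.2
  have h0 : prod.lift (𝟙 (Δ[0] : SSet.{u})) (vert 0 0) ≫ H = x0 := by
    rw [hH, ← Category.assoc, prod.lift_snd]
    apply hom_ext_ev
    show ev (SSet.stdSimplex.map (SimplexCategory.const (SimplexCategory.mk 0)
      (SimplexCategory.mk 1) 0) ≫ E) = ev x0
    erw [ev_std, hE, hx0, ev_ptMap, ev_ptMap]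
    refine Prod.ext ?_ ?_
    · show ((1 : G))⁻¹ * 1 = (1 : G)
      rw [inv_one, one_mul]
    · funext k
      exact k.elim0
  have h1 : prod.lift (𝟙 (Δ[0] : SSet.{u})) (vert 0 1) ≫ H = y0 := by
    rw [hH, ← Category.assoc, prod.lift_snd]
    apply hom_ext_ev
    show ev (SSet.stdSimplex.map (SimplexCategory.const (SimplexCategory.mk 0)
      (SimplexCategory.mk 1) 1) ≫ E) = ev y0
    erw [ev_std, hE, hy0, ev_ptMap, ev_ptMap]
    refine Prod.ext ?_ ?_
    · show ((1 : G) * g0⁻¹)⁻¹ * 1 = g0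
      group
    · funext k
      exact k.elim0
  have hb : prod.map (∂Δ[0].ι) (𝟙 (Δ[1] : SSet.{u})) ≫ H =
      prod.fst ≫ ∂Δ[0].ι ≫ x0 := by
    apply SSet.hom_ext
    intro j
    refine ConcreteCategory.hom_ext _ _ fun σ => ?_
    haveI : Subsingleton (Fin (0 + 1)) := (inferInstance : Subsingleton (Fin 1))
    exact absurd (fun b => ⟨0, Subsingleton.elim _ _⟩)
      ((prod.fst : (∂Δ[0] : SSet.{u}) ⨯ Δ[1] ⟶ ∂Δ[0]).app j σ).2
  intro hmin
  have heq := hmin.2 0 x0 y0 (hbdry x0 y0) (to_pt_unique _ _)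
    ⟨H, h0, h1, hb, to_pt_unique _ _⟩
  have h2 := congrArg ev heq
  erw [hx0, hy0, ev_ptMap, ev_ptMap] at h2
  exact hg0 (congrArg Prod.fst h2).symm

end Stmt19

/-- Minimal Kan fibrations do not compose: for a nontrivial group `G`, the
projection `π : G//G ⟶ NG` and the unique map `NG ⟶ Δ⁰` are minimal Kan fibrations, but the
composite `G//G ⟶ Δ⁰` is a Kan fibration which is not minimal. -/
theorem stmt_19 (G : Type u) [Group G] [Nontrivial G] :
    IsMinimalKanFib (projG G) ∧
    IsMinimalKanFib (toPt (NerveG G)) ∧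
    IsKanFibSSet (projG G ≫ toPt (NerveG G)) ∧
    ¬ IsMinimalKanFib (projG G ≫ toPt (NerveG G)) :=
  ⟨Stmt19.min_projG, Stmt19.min_toPt_nerve,
    Stmt19.isKanFib_comp Stmt19.isKanFib_projG Stmt19.isKanFib_toPt_nerve,
    Stmt19.comp_not_min G⟩

end
end
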